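/- arXiv:1002.2436 — 6 statements merged into one kernel-verified Lean document; each statement's English description precedes it below -/
import Mathlib

section
/- Let X and E be finite random variables with joint distribution P, and let F be a two-universal family of hash functions from X's alphabet to {0,1}^ℓ. Then E_f[ (1/2) Σ_{z,e} |P_{f(X),E}(z,e) − 2^{−ℓ} P_E(e)| ] ≤ (1/2) √(2^{ℓ − H_min(X|E)}), where the expectation is over a uniformly random f ∈ F and H_min(X|E) = −log Σ_e P_E(e) max_x P_{X|E=e}(x). -/
private lemma lhl_aux
    (𝒳 ℰ F : Type*) [Fintype 𝒳] [Fintype ℰ] [Fintype F]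
    [Nonempty 𝒳] [Nonempty ℰ] [Nonempty F] [DecidableEq 𝒳]
    (ℓ : ℕ) (hash : F → 𝒳 → (Fin ℓ → Bool))
    (P : 𝒳 × ℰ → ℝ) (hP : ∀ p, 0 ≤ P p) (hPsum : ∑ p, P p = 1)
    (htu : ∀ x x' : 𝒳, x ≠ x' →
      ((Finset.univ.filter (fun f : F => hash f x = hash f x')).card : ℝ) /
        (Fintype.card F : ℝ) ≤ 1 / 2 ^ ℓ)
    (PE M : ℰ → ℝ) (Q : F → (Fin ℓ → Bool) → ℰ → ℝ)
    (hPEdef : ∀ e, PE e = ∑ x : 𝒳, P (x, e))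
    (hMdef : ∀ e, M e = Finset.univ.sup' Finset.univ_nonempty (fun x : 𝒳 => P (x, e)))
    (hQdef : ∀ f z e, Q f z e = ∑ x ∈ Finset.univ.filter (fun x => hash f x = z), P (x, e)) :
    (1 / (Fintype.card F : ℝ)) * ∑ f : F, (1 / 2) *
        ∑ z : Fin ℓ → Bool, ∑ e : ℰ, |Q f z e - (1 / 2 ^ ℓ : ℝ) * PE e|
      ≤ (1 / 2) * Real.sqrt ((2 : ℝ) ^ ((ℓ : ℝ) -
          (- Real.logb 2 (∑ e : ℰ, M e)))) := by
  classical
  obtain ⟨x₀⟩ := ‹Nonempty 𝒳›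
  set N := (Fintype.card F : ℝ) with hNdef
  have hN : (0:ℝ) < N := by
    rw [hNdef]; exact_mod_cast Fintype.card_pos
  set u : ℝ := 1 / 2 ^ ℓ with hudef
  have hu : (0:ℝ) < u := by rw [hudef]; positivity
  have hcu : (2:ℝ) ^ ℓ * u = 1 := by rw [hudef]; field_simp
  have hPE0 : ∀ e, 0 ≤ PE e := fun e => by
    rw [hPEdef]; exact Finset.sum_nonneg fun x _ => hP _
  have hMle : ∀ e x, P (x, e) ≤ M e := fun e x => by
    rw [hMdef]; exact Finset.le_sup' (fun y : 𝒳 => P (y, e)) (Finset.mem_univ x)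
  have hM0 : ∀ e, 0 ≤ M e := fun e => (hP (x₀, e)).trans (hMle e x₀)
  have hPEsum : ∑ e, PE e = 1 := by
    simp_rw [hPEdef]
    rw [← hPsum, Fintype.sum_prod_type]
    exact Finset.sum_comm
  set S : ℝ := ∑ e, M e with hSdef
  have hS0 : 0 < S := by
    by_contra h
    push_neg at h
    have hS0' : S = 0 := le_antisymm h (Finset.sum_nonneg fun e _ => hM0 e)
    have hall : ∀ e ∈ Finset.univ, M e = 0 :=
      (Finset.sum_eq_zero_iff_of_nonneg (fun e _ => hM0 e)).1 hS0'
    have hP0 : ∀ p : 𝒳 × ℰ, P p = 0 := by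
      rintro ⟨x, e⟩
      exact le_antisymm ((hMle e x).trans_eq (hall e (Finset.mem_univ e))) (hP _)
    rw [Finset.sum_congr rfl fun p _ => hP0 p] at hPsum
    simp at hPsum
  have hcard : (Finset.univ : Finset (Fin ℓ → Bool)).card = 2 ^ ℓ := by
    simp [Finset.card_univ, Fintype.card_fun]
  -- key estimate for each e
  have key : ∀ e : ℰ, ∑ f : F, ∑ z : Fin ℓ → Bool, |Q f z e - u * PE e|
      ≤ N * Real.sqrt ((2:ℝ)^ℓ * (M e * PE e)) := by
    intro e
    have hQsum : ∀ f : F, ∑ z : Fin ℓ → Bool, Q f z e = PE e := by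
      intro f
      simp_rw [hQdef, hPEdef]
      exact Finset.sum_fiberwise Finset.univ (hash f) (fun x => P (x, e))
    have hQsq : ∀ f : F, ∑ z : Fin ℓ → Bool, (Q f z e)^2
        = ∑ x : 𝒳, ∑ x' : 𝒳, (if hash f x' = hash f x then P (x,e) * P (x',e) else 0) := by
      intro f
      have hQ' : ∀ z, Q f z e = ∑ x : 𝒳, (if hash f x = z then P (x,e) else 0) := by
        intro z
        rw [hQdef]
        exact Finset.sum_filter _ _
      calc ∑ z : Fin ℓ → Bool, (Q f z e)^2
          = ∑ z : Fin ℓ → Bool, ∑ x : 𝒳, ∑ x' : 𝒳,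
              (if hash f x = z then P (x,e) else 0) * (if hash f x' = z then P (x',e) else 0) := by
            refine Finset.sum_congr rfl fun z _ => ?_
            rw [hQ', sq, Finset.sum_mul_sum]
        _ = ∑ x : 𝒳, ∑ x' : 𝒳, ∑ z : Fin ℓ → Bool,
              (if hash f x = z then P (x,e) else 0) * (if hash f x' = z then P (x',e) else 0) := by
            rw [Finset.sum_comm]
            exact Finset.sum_congr rfl fun x _ => Finset.sum_comm
        _ = ∑ x : 𝒳, ∑ x' : 𝒳, (if hash f x' = hash f x then P (x,e) * P (x',e) else 0) := by
            refine Finset.sum_congr rfl fun x _ => Finset.sum_congr rfl fun x' _ => ?_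
            rcases eq_or_ne (hash f x) (hash f x') with h | h
            · simp [ite_mul, mul_ite, Finset.sum_ite_eq, Finset.sum_ite_eq', h]
            · simp [ite_mul, mul_ite, Finset.sum_ite_eq, Finset.sum_ite_eq', h, h.symm]
    have h2 : ∀ x x' : 𝒳,
        ((Finset.univ.filter fun f : F => hash f x' = hash f x).card : ℝ) * (P (x,e) * P (x',e))
          ≤ N * (u * (P (x,e) * P (x',e))) + (if x' = x then N * P (x,e)^2 else 0) := by
      intro x x'
      by_cases hxx : x' = x
      · subst hxx
        rw [if_pos rfl]
        have hfu : (Finset.univ.filter fun f : F => hash f x' = hash f x').card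
            = Fintype.card F := by
          rw [Finset.filter_true_of_mem fun f _ => rfl, Finset.card_univ]
        rw [hfu, ← hNdef]
        nlinarith [hP (x', e), mul_pos hN hu, sq_nonneg (P (x',e)),
          mul_nonneg (mul_nonneg hN.le hu.le) (mul_nonneg (hP (x',e)) (hP (x',e)))]
      · rw [if_neg hxx, add_zero]
        have hc : ((Finset.univ.filter fun f : F => hash f x' = hash f x).card : ℝ) ≤ N * u := by
          have := htu x' x hxx
          rw [div_le_iff₀ hN] at this
          linarith [this]
        have hpp : 0 ≤ P (x,e) * P (x',e) := mul_nonneg (hP _) (hP _)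
        calc ((Finset.univ.filter fun f : F => hash f x' = hash f x).card : ℝ)
              * (P (x,e) * P (x',e))
            ≤ (N * u) * (P (x,e) * P (x',e)) := mul_le_mul_of_nonneg_right hc hpp
          _ = N * (u * (P (x,e) * P (x',e))) := by ring
    have hcount : ∑ f : F, ∑ z : Fin ℓ → Bool, (Q f z e)^2
        ≤ N * (∑ x : 𝒳, P (x,e)^2) + N * (u * (PE e)^2) := by
      have h1 : (∑ f : F, ∑ z : Fin ℓ → Bool, (Q f z e)^2)
          = ∑ x : 𝒳, ∑ x' : 𝒳,
              ((Finset.univ.filter fun f : F => hash f x' = hash f x).card : ℝ)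
                * (P (x,e) * P (x',e)) := by
        rw [Finset.sum_congr rfl fun f _ => hQsq f]
        rw [Finset.sum_comm]
        refine Finset.sum_congr rfl fun x _ => ?_
        rw [Finset.sum_comm]
        refine Finset.sum_congr rfl fun x' _ => ?_
        rw [← Finset.sum_filter]
        simp [Finset.sum_const, nsmul_eq_mul]
      have hA : ∑ x : 𝒳, ∑ x' : 𝒳, N * (u * (P (x,e) * P (x',e)))
          = N * (u * (PE e * PE e)) := by
        rw [hPEdef]
        rw [show (∑ x : 𝒳, P (x,e)) * (∑ x : 𝒳, P (x,e))
            = ∑ x : 𝒳, ∑ x' : 𝒳, P (x,e) * P (x',e) from Finset.sum_mul_sum _ _ _ _]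
        rw [Finset.mul_sum, Finset.mul_sum]
        refine Finset.sum_congr rfl fun x _ => ?_
        rw [Finset.mul_sum, Finset.mul_sum]
      have hB : ∑ x : 𝒳, ∑ x' : 𝒳, (if x' = x then N * P (x,e)^2 else 0)
          = N * ∑ x : 𝒳, P (x,e)^2 := by
        rw [Finset.mul_sum]
        refine Finset.sum_congr rfl fun x _ => ?_
        simp [Finset.sum_ite_eq, Finset.sum_ite_eq']
      calc ∑ f : F, ∑ z : Fin ℓ → Bool, (Q f z e)^2
          = ∑ x : 𝒳, ∑ x' : 𝒳,
              ((Finset.univ.filter fun f : F => hash f x' = hash f x).card : ℝ)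
                * (P (x,e) * P (x',e)) := h1
        _ ≤ ∑ x : 𝒳, ∑ x' : 𝒳, (N * (u * (P (x,e) * P (x',e)))
              + (if x' = x then N * P (x,e)^2 else 0)) :=
            Finset.sum_le_sum fun x _ => Finset.sum_le_sum fun x' _ => h2 x x'
        _ = N * (∑ x : 𝒳, P (x,e)^2) + N * (u * (PE e)^2) := by
            simp only [Finset.sum_add_distrib]
            rw [hA, hB]
            ring
    have hV : ∀ f : F, ∑ z : Fin ℓ → Bool, (Q f z e - u * PE e)^2
        = (∑ z : Fin ℓ → Bool, (Q f z e)^2) - u * (PE e)^2 := by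
      intro f
      have e1 : ∑ z : Fin ℓ → Bool, (Q f z e - u * PE e)^2
          = (∑ z : Fin ℓ → Bool, (Q f z e)^2)
            - 2 * (u * PE e) * (∑ z : Fin ℓ → Bool, Q f z e)
            + ((2:ℝ)^ℓ) * (u * PE e)^2 := by
        rw [Finset.sum_congr rfl fun z _ => sub_sq (Q f z e) (u * PE e)]
        rw [Finset.sum_add_distrib, Finset.sum_sub_distrib, Finset.sum_const, hcard,
          nsmul_eq_mul, ← Finset.sum_mul, ← Finset.mul_sum]
        push_cast
        ring
      rw [e1, hQsum f]
      linear_combination (u * (PE e)^2) * hcu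
    have hVsum : ∑ f : F, ∑ z : Fin ℓ → Bool, (Q f z e - u * PE e)^2 ≤ N * (M e * PE e) := by
      have h3 : ∑ f : F, ∑ z : Fin ℓ → Bool, (Q f z e - u * PE e)^2
          = (∑ f : F, ∑ z : Fin ℓ → Bool, (Q f z e)^2) - N * (u * (PE e)^2) := by
        rw [Finset.sum_congr rfl fun f _ => hV f, Finset.sum_sub_distrib, Finset.sum_const,
          Finset.card_univ, nsmul_eq_mul, ← hNdef]
      rw [h3]
      have h4 : ∑ x : 𝒳, P (x,e)^2 ≤ M e * PE e := by
        rw [hPEdef, Finset.mul_sum]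
        exact Finset.sum_le_sum fun x _ => by nlinarith [hP (x,e), hMle e x]
      have h5 := mul_le_mul_of_nonneg_left h4 hN.le
      linarith
    have hW0 : ∀ f : F, (0:ℝ) ≤ (2:ℝ)^ℓ * ∑ z : Fin ℓ → Bool, (Q f z e - u * PE e)^2 :=
      fun f => mul_nonneg (by positivity) (Finset.sum_nonneg fun z _ => sq_nonneg _)
    have hDf : ∀ f : F, ∑ z : Fin ℓ → Bool, |Q f z e - u * PE e|
        ≤ Real.sqrt ((2:ℝ)^ℓ * ∑ z : Fin ℓ → Bool, (Q f z e - u * PE e)^2) := by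
      intro f
      rw [Real.le_sqrt (Finset.sum_nonneg fun z _ => abs_nonneg _) (hW0 f)]
      calc (∑ z : Fin ℓ → Bool, |Q f z e - u * PE e|)^2
          = (∑ z : Fin ℓ → Bool, |Q f z e - u * PE e| * 1)^2 := by simp
        _ ≤ (∑ z : Fin ℓ → Bool, |Q f z e - u * PE e|^2) * (∑ _z : Fin ℓ → Bool, (1:ℝ)^2) :=
            Finset.sum_mul_sq_le_sq_mul_sq _ _ _
        _ = (2:ℝ)^ℓ * ∑ z : Fin ℓ → Bool, (Q f z e - u * PE e)^2 := by
            simp only [sq_abs, one_pow, Finset.sum_const, hcard, nsmul_eq_mul, mul_one]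
            push_cast
            ring
    have hsumf : ∑ f : F, Real.sqrt ((2:ℝ)^ℓ * ∑ z : Fin ℓ → Bool, (Q f z e - u * PE e)^2)
        ≤ Real.sqrt (N * ∑ f : F, (2:ℝ)^ℓ * ∑ z : Fin ℓ → Bool, (Q f z e - u * PE e)^2) := by
      rw [Real.le_sqrt (Finset.sum_nonneg fun f _ => Real.sqrt_nonneg _)
        (mul_nonneg hN.le (Finset.sum_nonneg fun f _ => hW0 f))]
      calc (∑ f : F, Real.sqrt ((2:ℝ)^ℓ * ∑ z : Fin ℓ → Bool, (Q f z e - u * PE e)^2))^2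
          = (∑ f : F, 1 * Real.sqrt ((2:ℝ)^ℓ * ∑ z : Fin ℓ → Bool, (Q f z e - u * PE e)^2))^2 := by
            simp
        _ ≤ (∑ _f : F, (1:ℝ)^2) *
              ∑ f : F, (Real.sqrt ((2:ℝ)^ℓ * ∑ z : Fin ℓ → Bool, (Q f z e - u * PE e)^2))^2 :=
            Finset.sum_mul_sq_le_sq_mul_sq _ _ _
        _ = N * ∑ f : F, (2:ℝ)^ℓ * ∑ z : Fin ℓ → Bool, (Q f z e - u * PE e)^2 := by
            rw [Finset.sum_congr rfl fun f _ => Real.sq_sqrt (hW0 f)]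
            simp [Finset.sum_const, Finset.card_univ, hNdef]
    calc ∑ f : F, ∑ z : Fin ℓ → Bool, |Q f z e - u * PE e|
        ≤ ∑ f : F, Real.sqrt ((2:ℝ)^ℓ * ∑ z : Fin ℓ → Bool, (Q f z e - u * PE e)^2) :=
          Finset.sum_le_sum fun f _ => hDf f
      _ ≤ Real.sqrt (N * ∑ f : F, (2:ℝ)^ℓ * ∑ z : Fin ℓ → Bool, (Q f z e - u * PE e)^2) := hsumf
      _ ≤ Real.sqrt (N * ((2:ℝ)^ℓ * (N * (M e * PE e)))) := by
          apply Real.sqrt_le_sqrt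
          rw [← Finset.mul_sum]
          exact mul_le_mul_of_nonneg_left
            (mul_le_mul_of_nonneg_left hVsum (by positivity)) hN.le
      _ = N * Real.sqrt ((2:ℝ)^ℓ * (M e * PE e)) := by
          rw [show N * ((2:ℝ)^ℓ * (N * (M e * PE e))) = N^2 * ((2:ℝ)^ℓ * (M e * PE e)) from by
            ring, Real.sqrt_mul (sq_nonneg N), Real.sqrt_sq hN.le]
  -- Cauchy–Schwarz over e
  have hCSe : ∑ e : ℰ, Real.sqrt (M e) * Real.sqrt (PE e) ≤ Real.sqrt S := by
    rw [Real.le_sqrt (Finset.sum_nonneg fun e _ =>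
      mul_nonneg (Real.sqrt_nonneg _) (Real.sqrt_nonneg _)) hS0.le]
    calc (∑ e : ℰ, Real.sqrt (M e) * Real.sqrt (PE e))^2
        ≤ (∑ e : ℰ, (Real.sqrt (M e))^2) * ∑ e : ℰ, (Real.sqrt (PE e))^2 :=
          Finset.sum_mul_sq_le_sq_mul_sq _ _ _
      _ = S * 1 := by
          rw [Finset.sum_congr rfl fun e _ => Real.sq_sqrt (hM0 e),
            Finset.sum_congr rfl fun e _ => Real.sq_sqrt (hPE0 e), hPEsum, ← hSdef]
      _ = S := mul_one S
  -- assemble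
  calc (1 / N) * ∑ f : F, (1/2) * ∑ z : Fin ℓ → Bool, ∑ e : ℰ, |Q f z e - u * PE e|
      = (1/(2*N)) * ∑ e : ℰ, ∑ f : F, ∑ z : Fin ℓ → Bool, |Q f z e - u * PE e| := by
        rw [← Finset.mul_sum]
        rw [show ∑ f : F, ∑ z : Fin ℓ → Bool, ∑ e : ℰ, |Q f z e - u * PE e|
            = ∑ e : ℰ, ∑ f : F, ∑ z : Fin ℓ → Bool, |Q f z e - u * PE e| from by
          rw [Finset.sum_congr rfl fun f _ => Finset.sum_comm]
          exact Finset.sum_comm]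
        ring
    _ ≤ (1/(2*N)) * ∑ e : ℰ, N * Real.sqrt ((2:ℝ)^ℓ * (M e * PE e)) :=
        mul_le_mul_of_nonneg_left (Finset.sum_le_sum fun e _ => key e) (by positivity)
    _ = (1/2) * ∑ e : ℰ, Real.sqrt ((2:ℝ)^ℓ) * (Real.sqrt (M e) * Real.sqrt (PE e)) := by
        rw [Finset.sum_congr rfl fun e _ => show
            N * Real.sqrt ((2:ℝ)^ℓ * (M e * PE e))
              = N * (Real.sqrt ((2:ℝ)^ℓ) * (Real.sqrt (M e) * Real.sqrt (PE e))) from by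
          rw [Real.sqrt_mul (by positivity), Real.sqrt_mul (hM0 e)]]
        rw [← Finset.mul_sum]
        field_simp
    _ = (1/2) * Real.sqrt ((2:ℝ)^ℓ) * ∑ e : ℰ, Real.sqrt (M e) * Real.sqrt (PE e) := by
        rw [← Finset.mul_sum]
        ring
    _ ≤ (1/2) * Real.sqrt ((2:ℝ)^ℓ) * Real.sqrt S :=
        mul_le_mul_of_nonneg_left hCSe (by positivity)
    _ = (1/2) * Real.sqrt ((2:ℝ)^ℓ * S) := by
        rw [Real.sqrt_mul (by positivity), mul_assoc]
    _ = (1/2) * Real.sqrt ((2:ℝ) ^ ((ℓ:ℝ) - (- Real.logb 2 S))) := by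
        rw [sub_neg_eq_add, Real.rpow_add two_pos, Real.rpow_natCast,
          Real.rpow_logb two_pos (by norm_num) hS0]

/-- Classical Leftover Hash Lemma: for a two-universal family of hash functions
from `𝒳` to `{0,1}^ℓ`, the expected (over uniform `f`) statistical distance of
`(f(X), E)` from uniform × `P_E` is at most `(1/2)·√(2^{ℓ − H_min(X|E)})`,
where `H_min(X|E) = −log₂ Σ_e max_x P(x,e)`. -/
theorem classical_leftover_hash_lemma
    (𝒳 ℰ F : Type*) [Fintype 𝒳] [Fintype ℰ] [Fintype F]
    [Nonempty 𝒳] [Nonempty ℰ] [Nonempty F] [DecidableEq 𝒳]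
    (ℓ : ℕ) (hash : F → 𝒳 → (Fin ℓ → Bool))
    (P : 𝒳 × ℰ → ℝ) (hP : ∀ p, 0 ≤ P p) (hPsum : ∑ p, P p = 1)
    (htu : ∀ x x' : 𝒳, x ≠ x' →
      ((Finset.univ.filter (fun f : F => hash f x = hash f x')).card : ℝ) /
        (Fintype.card F : ℝ) ≤ 1 / 2 ^ ℓ) :
    (1 / (Fintype.card F : ℝ)) * ∑ f : F, (1 / 2) *
        ∑ z : Fin ℓ → Bool, ∑ e : ℰ,
          |(∑ x ∈ Finset.univ.filter (fun x => hash f x = z), P (x, e)) -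
            (1 / 2 ^ ℓ) * ∑ x : 𝒳, P (x, e)|
      ≤ (1 / 2) * Real.sqrt ((2 : ℝ) ^ ((ℓ : ℝ) -
          (- Real.logb 2 (∑ e : ℰ,
              Finset.univ.sup' Finset.univ_nonempty (fun x : 𝒳 => P (x, e)))))) := by
  exact lhl_aux 𝒳 ℰ F ℓ hash P hP hPsum htu
    (fun e => ∑ x : 𝒳, P (x, e))
    (fun e => Finset.univ.sup' Finset.univ_nonempty (fun x : 𝒳 => P (x, e)))
    (fun f z e => ∑ x ∈ Finset.univ.filter (fun x => hash f x = z), P (x, e))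
    (fun _ => rfl) (fun _ => rfl) (fun _ _ _ => rfl)
end

section
/- Let X, E be finite random variables and F a δ-almost two-universal family of hash functions from 𝒳 to {0,1}^ℓ. Then the expected (over uniform f ∈ F) statistical distance of (f(X),E) from (uniform on {0,1}^ℓ) × E is at most (1/2)·√((2^ℓ δ − 1) + 2^{ℓ − H_min(X|E)}). -/
/-!
Cauchy–Schwarz with weights `P_E(e)` bounds the averaged `L¹` distance by
`√(|Z| · Σ_e E_f ‖P_{f(X),e} - P_E(e)/|Z|‖₂² / P_E(e))`. Each squared `L²` distance is the collision
mass `Σ_z P_{f(X),e}(z)²` minus `P_E(e)²/|Z|`, and δ-almost two-universality bounds its average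
over `f` by `Σ_x P(x,e)² + δ P_E(e)² ≤ max_x P(x,e) · P_E(e) + δ P_E(e)²`.
-/

open Finset

theorem Finset.sq_sum_abs_le_sum_mul_sum_sq_div {ι : Type*} (s : Finset ι) (a w : ι → ℝ)
    (hw : ∀ i ∈ s, 0 ≤ w i) (ha : ∀ i ∈ s, w i = 0 → a i = 0) :
    (∑ i ∈ s, |a i|) ^ 2 ≤ (∑ i ∈ s, w i) * ∑ i ∈ s, a i ^ 2 / w i := by
  refine sum_sq_le_sum_mul_sum_of_sq_le_mul s hw (fun i hi => div_nonneg (sq_nonneg _) (hw i hi))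
    fun i hi => ?_
  rcases (hw i hi).eq_or_lt' with h | h
  · simp [ha i hi h]
  · rw [sq_abs, mul_div_cancel₀ _ h.ne']

theorem sum_sq_sub_mean_eq {Z : Type*} [Fintype Z] (q : Z → ℝ) :
    ∑ z, (q z - 1 / Fintype.card Z * ∑ z', q z') ^ 2
      = ∑ z, q z ^ 2 - 1 / Fintype.card Z * (∑ z, q z) ^ 2 := by
  rcases isEmpty_or_nonempty Z with _ | _
  · simp
  have hK : (Fintype.card Z : ℝ) ≠ 0 := by positivity
  simp_rw [sub_sq, sum_add_distrib, sum_sub_distrib, ← sum_mul, ← mul_sum, sum_const, card_univ,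
    nsmul_eq_mul]
  field_simp
  ring

theorem sum_sq_sum_filter_eq_sum_sum_ite {X Z : Type*} [Fintype X] [Fintype Z] [DecidableEq Z]
    (g : X → Z) (p : X → ℝ) :
    ∑ z, (∑ x with g x = z, p x) ^ 2 = ∑ x, ∑ x', if g x = g x' then p x * p x' else 0 := by
  simp_rw [sum_filter, sq, sum_mul_sum]
  rw [sum_comm]
  refine sum_congr rfl fun x _ => ?_
  rw [sum_comm]
  refine sum_congr rfl fun x' _ => ?_
  simp

def IsAlmostTwoUniversal {X Z F : Type*} [DecidableEq Z] [Fintype F] (hash : F → X → Z)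
    (δ : ℝ) : Prop :=
  ∀ x x' : X, x ≠ x' →
    ((univ.filter (fun f : F => hash f x = hash f x')).card : ℝ) / Fintype.card F ≤ δ

theorem card_filter_hash_eq_le {X Z F : Type*} [DecidableEq X] [DecidableEq Z]
    [Fintype F] [Nonempty F] (hash : F → X → Z) {δ : ℝ} (hδ : 0 ≤ δ)
    (htu : IsAlmostTwoUniversal hash δ)
    (x x' : X) :
    ((univ.filter (fun f : F => hash f x = hash f x')).card : ℝ)
      ≤ Fintype.card F * (if x = x' then 1 else 0) + δ * Fintype.card F := by
  have hN : (0 : ℝ) < Fintype.card F := by exact_mod_cast Fintype.card_pos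
  by_cases h : x = x'
  · subst h
    simp only [filter_true, card_univ, if_true, mul_one, le_add_iff_nonneg_right]
    positivity
  · simpa [h, div_le_iff₀ hN] using htu x x' h

theorem sum_sum_sq_hash_le {X Z F : Type*} [Fintype X] [DecidableEq X] [Fintype Z]
    [DecidableEq Z] [Fintype F] [Nonempty F] (hash : F → X → Z) {δ : ℝ} (hδ : 0 ≤ δ)
    (htu : IsAlmostTwoUniversal hash δ)
    (p : X → ℝ) (hp : ∀ x, 0 ≤ p x) :
    ∑ f, ∑ z, (∑ x with hash f x = z, p x) ^ 2
      ≤ Fintype.card F * (∑ x, p x ^ 2 + δ * (∑ x, p x) ^ 2) := by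
  calc ∑ f, ∑ z, (∑ x with hash f x = z, p x) ^ 2
      = ∑ x, ∑ x', ((univ.filter (fun f : F => hash f x = hash f x')).card : ℝ)
          * (p x * p x') := by
        simp_rw [sum_sq_sum_filter_eq_sum_sum_ite]
        rw [sum_comm]
        refine sum_congr rfl fun x _ => ?_
        rw [sum_comm]
        refine sum_congr rfl fun x' _ => ?_
        rw [← sum_filter, sum_const, nsmul_eq_mul]
    _ ≤ ∑ x, ∑ x', (Fintype.card F * (if x = x' then 1 else 0) + δ * Fintype.card F)
          * (p x * p x') := by
        gcongr with x _ x' _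
        · exact mul_nonneg (hp x) (hp x')
        · exact card_filter_hash_eq_le hash hδ htu x x'
    _ = Fintype.card F * (∑ x, p x ^ 2 + δ * (∑ x, p x) ^ 2) := by
        simp [add_mul, sum_add_distrib, ← mul_sum, ← sum_mul, sq]
        ring

theorem sum_sum_sq_hash_sub_uniform_le {X Z F : Type*} [Fintype X] [DecidableEq X]
    [Fintype Z] [DecidableEq Z] [Fintype F] [Nonempty F] (hash : F → X → Z) {δ : ℝ} (hδ : 0 ≤ δ)
    (htu : IsAlmostTwoUniversal hash δ)
    (p : X → ℝ) (hp : ∀ x, 0 ≤ p x) {m : ℝ} (hm : ∀ x, p x ≤ m) :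
    ∑ f, ∑ z, (∑ x with hash f x = z, p x - 1 / Fintype.card Z * ∑ x, p x) ^ 2
      ≤ Fintype.card F * (∑ x, p x) * (m + (δ - 1 / Fintype.card Z) * ∑ x, p x) := by
  have hfiber : ∀ f, ∑ z, ∑ x with hash f x = z, p x = ∑ x, p x := fun f =>
    sum_fiberwise univ (hash f) p
  have hsq : ∑ x, p x ^ 2 ≤ m * ∑ x, p x := by
    rw [mul_sum]
    exact sum_le_sum fun x _ => by rw [sq]; exact mul_le_mul_of_nonneg_right (hm x) (hp x)
  calc ∑ f, ∑ z, (∑ x with hash f x = z, p x - 1 / Fintype.card Z * ∑ x, p x) ^ 2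
      = ∑ f, ∑ z, (∑ x with hash f x = z, p x) ^ 2
          - Fintype.card F * (1 / Fintype.card Z * (∑ x, p x) ^ 2) := by
        have hmean := fun f => sum_sq_sub_mean_eq fun z => ∑ x with hash f x = z, p x
        simp only [hfiber] at hmean
        rw [sum_congr rfl fun f _ => hmean f, sum_sub_distrib, sum_const, card_univ, nsmul_eq_mul]
    _ ≤ Fintype.card F * (∑ x, p x ^ 2 + δ * (∑ x, p x) ^ 2)
          - Fintype.card F * (1 / Fintype.card Z * (∑ x, p x) ^ 2) := by
        gcongr
        exact sum_sum_sq_hash_le hash hδ htu p hp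
    _ ≤ Fintype.card F * (∑ x, p x) * (m + (δ - 1 / Fintype.card Z) * ∑ x, p x) := by
        have hN : (0 : ℝ) ≤ Fintype.card F := Nat.cast_nonneg _
        nlinarith

theorem avg_sum_abs_hash_sub_uniform_le_sqrt {X E Z F : Type*} [Fintype X] [Nonempty X]
    [DecidableEq X] [Fintype E] [Fintype Z] [Nonempty Z] [DecidableEq Z] [Fintype F] [Nonempty F]
    (hash : F → X → Z) {δ : ℝ} (hδ : 0 ≤ δ)
    (htu : IsAlmostTwoUniversal hash δ)
    (P : X × E → ℝ) (hP : ∀ p, 0 ≤ P p) (hPsum : ∑ p, P p = 1)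
    (m : E → ℝ) (hm : ∀ x e, P (x, e) ≤ m e) :
    1 / (Fintype.card F : ℝ) * ∑ f, ∑ z, ∑ e,
        |∑ x with hash f x = z, P (x, e) - 1 / Fintype.card Z * ∑ x, P (x, e)|
      ≤ √(Fintype.card Z * δ - 1 + Fintype.card Z * ∑ e, m e) := by
  have hN : (0 : ℝ) < Fintype.card F := by exact_mod_cast Fintype.card_pos
  have hK : (0 : ℝ) < Fintype.card Z := by exact_mod_cast Fintype.card_pos
  set N : ℝ := (Fintype.card F : ℝ)
  set K : ℝ := (Fintype.card Z : ℝ)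
  set D : F → Z → E → ℝ := fun f z e =>
    ∑ x with hash f x = z, P (x, e) - 1 / K * ∑ x, P (x, e) with hD
  have hmarg_nonneg : ∀ e, 0 ≤ ∑ x, P (x, e) := fun e => sum_nonneg fun x _ => hP (x, e)
  have hmarg : ∑ e, ∑ x, P (x, e) = 1 := by
    rw [sum_comm, ← Fintype.sum_prod_type, hPsum]
  have hD_zero : ∀ f z e, ∑ x, P (x, e) = 0 → D f z e = 0 := fun f z e he => by
    have hPx := (sum_eq_zero_iff_of_nonneg fun x _ => hP (x, e)).1 he
    simp [hD, he, sum_eq_zero fun x hx => hPx x (mem_univ x)]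
  have hvar : ∀ e, (∑ f, ∑ z, D f z e ^ 2) / ∑ x, P (x, e)
      ≤ N * (m e + (δ - 1 / K) * ∑ x, P (x, e)) := fun e => by
    have hbound := sum_sum_sq_hash_sub_uniform_le hash hδ htu (fun x => P (x, e))
      (fun x => hP (x, e)) (fun x => hm x e)
    rcases (hmarg_nonneg e).eq_or_lt' with he | he
    · rw [he, div_zero, mul_zero, add_zero]
      exact mul_nonneg hN.le ((hP (Classical.arbitrary X, e)).trans (hm _ e))
    · rw [div_le_iff₀ he]
      linarith
  have hCS : (∑ f, ∑ z, ∑ e, |D f z e|) ^ 2 ≤ (N * K) * (N * (∑ e, m e + (δ - 1 / K))) := by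
    have h := Finset.sq_sum_abs_le_sum_mul_sum_sq_div univ
      (fun i : F × Z × E => D i.1 i.2.1 i.2.2) (fun i => ∑ x, P (x, i.2.2))
      (fun i _ => hmarg_nonneg i.2.2)
      (fun i _ => hD_zero i.1 i.2.1 i.2.2)
    simp only [Fintype.sum_prod_type] at h
    calc (∑ f, ∑ z, ∑ e, |D f z e|) ^ 2
        ≤ (∑ _f : F, ∑ _z : Z, ∑ e, ∑ x, P (x, e))
            * ∑ f, ∑ z, ∑ e, D f z e ^ 2 / ∑ x, P (x, e) := h
      _ = (N * K) * ∑ e, (∑ f, ∑ z, D f z e ^ 2) / ∑ x, P (x, e) := by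
        congr 1
        · simp [hmarg, N, K]
        · simp_rw [sum_div]
          exact (sum_congr rfl fun f _ => sum_comm).trans sum_comm
      _ ≤ (N * K) * ∑ e, N * (m e + (δ - 1 / K) * ∑ x, P (x, e)) := by
        gcongr with e
        exact hvar e
      _ = (N * K) * (N * (∑ e, m e + (δ - 1 / K))) := by
        rw [← mul_sum, sum_add_distrib, ← mul_sum, hmarg, mul_one]
  refine (le_abs_self _).trans (Real.abs_le_sqrt ?_)
  calc (1 / N * ∑ f, ∑ z, ∑ e, |D f z e|) ^ 2 = (∑ f, ∑ z, ∑ e, |D f z e|) ^ 2 / N ^ 2 := by ring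
    _ ≤ (N * K) * (N * (∑ e, m e + (δ - 1 / K))) / N ^ 2 := by gcongr
    _ = K * δ - 1 + K * ∑ e, m e := by field_simp; ring

theorem sum_sup'_pos_of_sum_eq_one {X E : Type*} [Fintype X] [Nonempty X] [Fintype E]
    (P : X × E → ℝ) (hPsum : ∑ p, P p = 1) :
    0 < ∑ e, univ.sup' univ_nonempty (fun x => P (x, e)) := by
  have h : (1 : ℝ) ≤ Fintype.card X * ∑ e, univ.sup' univ_nonempty (fun x => P (x, e)) := by
    calc (1 : ℝ) = ∑ x, ∑ e, P (x, e) := by rw [← Fintype.sum_prod_type, hPsum]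
      _ ≤ ∑ _x : X, ∑ e, univ.sup' univ_nonempty (fun x => P (x, e)) :=
        sum_le_sum fun x _ => sum_le_sum fun e _ => le_sup' (fun x => P (x, e)) (mem_univ x)
      _ = _ := by rw [sum_const, card_univ, nsmul_eq_mul]
  exact pos_of_mul_pos_right (one_pos.trans_le h) (Nat.cast_nonneg _)

theorem classical_leftover_hash_lemma_almost_two_universal_general
    (𝒳 ℰ F : Type*) [Fintype 𝒳] [Fintype ℰ] [Fintype F]
    [Nonempty 𝒳] [Nonempty F]
    (ℓ : ℕ) (δ : ℝ) (hash : F → 𝒳 → (Fin ℓ → Bool))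
    (P : 𝒳 × ℰ → ℝ) (hP : ∀ p, 0 ≤ P p) (hPsum : ∑ p, P p = 1)
    (hδ : 0 ≤ δ)
    (htu : ∀ x x' : 𝒳, x ≠ x' →
      ((Finset.univ.filter (fun f : F => hash f x = hash f x')).card : ℝ) /
        (Fintype.card F : ℝ) ≤ δ) :
    (1 / (Fintype.card F : ℝ)) * ∑ f : F, (1 / 2) *
        ∑ z : Fin ℓ → Bool, ∑ e : ℰ,
          |(∑ x ∈ Finset.univ.filter (fun x => hash f x = z), P (x, e)) -
            (1 / 2 ^ ℓ) * ∑ x : 𝒳, P (x, e)|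
      ≤ (1 / 2) * Real.sqrt ((2 ^ ℓ * δ - 1) + (2 : ℝ) ^ ((ℓ : ℝ) -
          (- Real.logb 2 (∑ e : ℰ,
              Finset.univ.sup' Finset.univ_nonempty (fun x : 𝒳 => P (x, e)))))) := by
  classical
  have hcard : (Fintype.card (Fin ℓ → Bool) : ℝ) = 2 ^ ℓ := by simp
  have hLHL := avg_sum_abs_hash_sub_uniform_le_sqrt hash hδ htu P hP hPsum
    (fun e => univ.sup' univ_nonempty fun x => P (x, e))
    fun x e => le_sup' (fun x => P (x, e)) (mem_univ x)
  rw [hcard] at hLHL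
  rw [sub_neg_eq_add, Real.rpow_add two_pos, Real.rpow_natCast,
    Real.rpow_logb two_pos (by norm_num) (sum_sup'_pos_of_sum_eq_one P hPsum), ← mul_sum,
    mul_left_comm]
  exact mul_le_mul_of_nonneg_left hLHL (by norm_num)

/-- Classical Leftover Hash Lemma for δ-almost two-universal hashing: the
expected (over uniform `f`) statistical distance of `(f(X), E)` from
uniform × `P_E` is at most `(1/2)·√((2^ℓ δ − 1) + 2^{ℓ − H_min(X|E)})`. -/
theorem classical_leftover_hash_lemma_almost_two_universal
    (𝒳 ℰ F : Type*) [Fintype 𝒳] [Fintype ℰ] [Fintype F]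
    [Nonempty 𝒳] [Nonempty ℰ] [Nonempty F] [DecidableEq 𝒳]
    (ℓ : ℕ) (δ : ℝ) (hash : F → 𝒳 → (Fin ℓ → Bool))
    (P : 𝒳 × ℰ → ℝ) (hP : ∀ p, 0 ≤ P p) (hPsum : ∑ p, P p = 1)
    (hδ : 0 ≤ δ)
    (htu : ∀ x x' : 𝒳, x ≠ x' →
      ((Finset.univ.filter (fun f : F => hash f x = hash f x')).card : ℝ) /
        (Fintype.card F : ℝ) ≤ δ) :
    (1 / (Fintype.card F : ℝ)) * ∑ f : F, (1 / 2) *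
        ∑ z : Fin ℓ → Bool, ∑ e : ℰ,
          |(∑ x ∈ Finset.univ.filter (fun x => hash f x = z), P (x, e)) -
            (1 / 2 ^ ℓ) * ∑ x : 𝒳, P (x, e)|
      ≤ (1 / 2) * Real.sqrt ((2 ^ ℓ * δ - 1) + (2 : ℝ) ^ ((ℓ : ℝ) -
          (- Real.logb 2 (∑ e : ℰ,
              Finset.univ.sup' Finset.univ_nonempty (fun x : 𝒳 => P (x, e)))))) :=
  classical_leftover_hash_lemma_almost_two_universal_general 𝒳 ℰ F ℓ δ hash P hP hPsum hδ htu
end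

section
/- For a classical joint distribution P on 𝒳 × ℰ, the min-entropy H_min(X|E) := max over distributions Q on ℰ of the largest λ such that P(x,e) ≤ 2^{−λ} Q(e) for all x, e equals −log Σ_e P_E(e) max_x P_{X|E=e}(x), i.e., −log of the optimal guessing probability of X given E. -/
/-!
Write `p_guess = ∑_e max_x P (x, e)`. A distribution `Q` on `ℰ` with `P (x, e) ≤ t * Q e` for all `x, e` forces
`max_x P (x, e) ≤ t * Q e`, and summing over `e` gives `p_guess ≤ t`. Conversely `Q e ∝ max_x P (x, e)`
attains `t = p_guess`. So the admissible `λ` are exactly those with `p_guess ≤ 2^{-λ}`,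
i.e. the interval `(-∞, -log₂ p_guess]`.
-/

open Finset

namespace MinEntropy

variable {𝒳 ℰ : Type*} [Fintype 𝒳] [Fintype ℰ] [Nonempty 𝒳]

/-- The optimal probability of guessing `X` from `E`. -/
noncomputable def guessProb (P : 𝒳 × ℰ → ℝ) : ℝ :=
  ∑ e, univ.sup' univ_nonempty fun x => P (x, e)

theorem guessProb_le_of_le_mul {P : 𝒳 × ℰ → ℝ} {Q : ℰ → ℝ} {t : ℝ} (hQ : ∑ e, Q e = 1)
    (hPQ : ∀ x e, P (x, e) ≤ t * Q e) : guessProb P ≤ t :=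
  calc guessProb P ≤ ∑ e, t * Q e :=
        sum_le_sum fun e _ => sup'_le _ _ fun x _ => hPQ x e
    _ = t := by rw [← mul_sum, hQ, mul_one]

theorem sum_le_card_mul_guessProb (P : 𝒳 × ℰ → ℝ) :
    ∑ p, P p ≤ Fintype.card 𝒳 * guessProb P := by
  rw [Fintype.sum_prod_type_right, guessProb, mul_sum]
  refine sum_le_sum fun e _ => ?_
  simpa using sum_le_card_nsmul univ (fun x => P (x, e)) _ fun x _ => le_sup' (fun x => P (x, e)) (mem_univ x)

theorem guessProb_pos {P : 𝒳 × ℰ → ℝ} (hPsum : ∑ p, P p = 1) : 0 < guessProb P := by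
  have h := sum_le_card_mul_guessProb P
  rw [hPsum] at h
  exact pos_of_mul_pos_right (one_pos.trans_le h) (Nat.cast_nonneg _)

theorem exists_distribution_le_guessProb_mul {P : 𝒳 × ℰ → ℝ} (hP : ∀ p, 0 ≤ P p)
    (hg : 0 < guessProb P) :
    ∃ Q : ℰ → ℝ, (∀ e, 0 ≤ Q e) ∧ ∑ e, Q e = 1 ∧ ∀ x e, P (x, e) ≤ guessProb P * Q e := by
  refine ⟨fun e => (univ.sup' univ_nonempty fun x => P (x, e)) / guessProb P,
    fun e => div_nonneg ?_ hg.le, ?_, fun x e => ?_⟩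
  · obtain ⟨x⟩ := ‹Nonempty 𝒳›
    exact (hP (x, e)).trans (le_sup' (fun x => P (x, e)) (mem_univ x))
  · rw [← sum_div, ← guessProb, div_self hg.ne']
  · rw [mul_div_cancel₀ _ hg.ne']
    exact le_sup' (fun x => P (x, e)) (mem_univ x)

end MinEntropy

open MinEntropy in
theorem classical_min_entropy_eq_guessing_general
    (𝒳 ℰ : Type*) [Fintype 𝒳] [Fintype ℰ] [Nonempty 𝒳]
    (P : 𝒳 × ℰ → ℝ) (hP : ∀ p, 0 ≤ P p) (hPsum : ∑ p, P p = 1) :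
    sSup {lam : ℝ | ∃ Q : ℰ → ℝ, (∀ e, 0 ≤ Q e) ∧ (∑ e, Q e) = 1 ∧
        ∀ x e, P (x, e) ≤ (2 : ℝ) ^ (-lam) * Q e}
      = - Real.logb 2 (∑ e : ℰ,
          Finset.univ.sup' Finset.univ_nonempty (fun x : 𝒳 => P (x, e))) := by
  change _ = -Real.logb 2 (guessProb P)
  have hg := guessProb_pos hPsum
  suffices hS : {lam : ℝ | ∃ Q : ℰ → ℝ, (∀ e, 0 ≤ Q e) ∧ (∑ e, Q e) = 1 ∧
      ∀ x e, P (x, e) ≤ (2 : ℝ) ^ (-lam) * Q e} = Set.Iic (-Real.logb 2 (guessProb P)) by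
    rw [hS, csSup_Iic]
  ext lam
  rw [Set.mem_Iic, le_neg, Real.logb_le_iff_le_rpow one_lt_two hg]
  constructor
  · rintro ⟨Q, -, hQ, hPQ⟩
    exact guessProb_le_of_le_mul hQ hPQ
  · intro hle
    obtain ⟨Q, hQ0, hQ, hPQ⟩ := exists_distribution_le_guessProb_mul hP hg
    exact ⟨Q, hQ0, hQ, fun x e => (hPQ x e).trans (mul_le_mul_of_nonneg_right hle (hQ0 e))⟩

/-- Operational interpretation of the classical conditional min-entropy:
`H_min(X|E) := sup over distributions Q on ℰ of sup{λ : P(x,e) ≤ 2^{−λ} Q(e)}`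
equals `−log₂` of the optimal guessing probability `Σ_e max_x P(x,e)`. -/
theorem classical_min_entropy_eq_guessing
    (𝒳 ℰ : Type*) [Fintype 𝒳] [Fintype ℰ] [Nonempty 𝒳] [Nonempty ℰ]
    (P : 𝒳 × ℰ → ℝ) (hP : ∀ p, 0 ≤ P p) (hPsum : ∑ p, P p = 1) :
    sSup {lam : ℝ | ∃ Q : ℰ → ℝ, (∀ e, 0 ≤ Q e) ∧ (∑ e, Q e) = 1 ∧
        ∀ x e, P (x, e) ≤ (2 : ℝ) ^ (-lam) * Q e}
      = - Real.logb 2 (∑ e : ℰ,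
          Finset.univ.sup' Finset.univ_nonempty (fun x : 𝒳 => P (x, e))) :=
  classical_min_entropy_eq_guessing_general 𝒳 ℰ P hP hPsum
end

section
/- Hölder inequality for three operators in trace norm: for linear operators A, B, C on a finite-dimensional Hilbert space and positive reals r, s, t with 1/r + 1/s + 1/t = 1, one has ‖ABC‖₁ ≤ (‖|A|^r‖₁)^{1/r} · (‖|B|^s‖₁)^{1/s} · (‖|C|^t‖₁)^{1/t}. -/
open Matrix Kronecker ComplexOrder

noncomputable section

/-- Apply a real function to the eigenvalues of a Hermitian matrix
(functional calculus); returns `0` on non-Hermitian input. -/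
def hermCFC {n : Type*} [Fintype n] [DecidableEq n] (f : ℝ → ℝ)
    (M : Matrix n n ℂ) : Matrix n n ℂ :=
  if h : M.IsHermitian then h.cfc f else 0

/-- The operator absolute value `|M| = √(Mᴴ M)`. -/
def matAbs {n : Type*} [Fintype n] [DecidableEq n] (M : Matrix n n ℂ) :
    Matrix n n ℂ :=
  (Matrix.posSemidef_conjTranspose_mul_self M).1.eigenvectorUnitary.1 *
    diagonal (((↑) : ℝ → ℂ) ∘ (√·) ∘ (Matrix.posSemidef_conjTranspose_mul_self M).1.eigenvalues) *
    (star (Matrix.posSemidef_conjTranspose_mul_self M).1.eigenvectorUnitary : Matrix n n ℂ)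

/-- The trace norm `‖M‖₁ = tr |M|`. -/
def traceNorm {n : Type*} [Fintype n] [DecidableEq n] (M : Matrix n n ℂ) : ℝ :=
  (matAbs M).trace.re

/-- Real power of a (Hermitian) matrix via eigenvalues. -/
def matRpow {n : Type*} [Fintype n] [DecidableEq n] (r : ℝ)
    (M : Matrix n n ℂ) : Matrix n n ℂ :=
  hermCFC (fun x => x ^ r) M

/-!
Polar decompositions give `‖ABC‖₁ = tr (V* ABC)` and `A = K_A diag(a) W_A` (likewise for `B`, `C`)
with contractions `V, K` and unitaries `W`, where `a, b, c` are the singular values; by cyclicity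
of the trace the claim becomes `|tr (M diag(a) N diag(b) P diag(c))| ≤ ‖a‖_r ‖b‖_s ‖c‖_t` for
contractions `M, N, P`. With `κ = 1/r + 1/t`, the entire function
`F z = tr (M diag(a^{rκz}) N diag(b) P diag(c^{tκ(1-z)}))` is bounded on the strip `0 ≤ re z ≤ 1`.
On each edge of the strip one of the two varying diagonals is a contraction, and the two-operator
inequality bounds `|F|`: for contractions `R, T` the matrix `(|R_ij| |T_ji|)` is doubly
substochastic, so Hölder's inequality applies to `∑ |R_ij| |T_ji| u_j^μ v_i^{1-μ}`. Hadamard's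
three-lines theorem at `θ = 1/(rκ)`, where `F θ` is the original trace, gives the claim.
-/

section MatAbs

open scoped MatrixOrder

variable {n : Type*} [Fintype n] [DecidableEq n]

lemma matAbs_eq_cfcSqrt (X : Matrix n n ℂ) : matAbs X = CFC.sqrt (Xᴴ * X) := by
  have hXX := posSemidef_conjTranspose_mul_self X
  rw [CFC.sqrt_eq_real_sqrt _ hXX.nonneg, cfcₙ_eq_cfc, hXX.1.cfc_eq]
  rfl

lemma posSemidef_matAbs (X : Matrix n n ℂ) : (matAbs X).PosSemidef := by
  rw [matAbs_eq_cfcSqrt, ← nonneg_iff_posSemidef]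
  exact CFC.sqrt_nonneg _

lemma matAbs_mul_self (X : Matrix n n ℂ) : matAbs X * matAbs X = Xᴴ * X := by
  rw [matAbs_eq_cfcSqrt]
  exact CFC.sqrt_mul_sqrt_self _ (posSemidef_conjTranspose_mul_self X).nonneg

lemma matAbs_of_posSemidef {Y : Matrix n n ℂ} (hY : Y.PosSemidef) : matAbs Y = Y := by
  rw [matAbs_eq_cfcSqrt, hY.1.eq]
  exact CFC.sqrt_mul_self Y hY.nonneg

lemma traceNorm_of_posSemidef {Y : Matrix n n ℂ} (hY : Y.PosSemidef) :
    traceNorm Y = Y.trace.re := by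
  rw [traceNorm, matAbs_of_posSemidef hY]

def singularValues (X : Matrix n n ℂ) : n → ℝ := (posSemidef_matAbs X).1.eigenvalues

lemma singularValues_nonneg (X : Matrix n n ℂ) (i : n) : 0 ≤ singularValues X i :=
  (posSemidef_matAbs X).eigenvalues_nonneg i

lemma matAbs_eq_conj_diagonal (X : Matrix n n ℂ) :
    matAbs X = (posSemidef_matAbs X).1.eigenvectorUnitary *
      diagonal (fun i => (singularValues X i : ℂ)) *
      (star (posSemidef_matAbs X).1.eigenvectorUnitary : Matrix n n ℂ) :=
  (posSemidef_matAbs X).1.spectral_theorem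

lemma conjTranspose_mul_self_mul_eigenvectorUnitary_matAbs (X : Matrix n n ℂ) :
    (X * ((posSemidef_matAbs X).1.eigenvectorUnitary : Matrix n n ℂ))ᴴ *
        (X * ((posSemidef_matAbs X).1.eigenvectorUnitary : Matrix n n ℂ)) =
      diagonal fun i => (singularValues X i : ℂ) ^ 2 := by
  set U : Matrix n n ℂ := ↑(posSemidef_matAbs X).1.eigenvectorUnitary
  have hUU : Uᴴ * U = 1 := Unitary.coe_star_mul_self _
  have hUUY : ∀ Y, Uᴴ * (U * Y) = Y := fun Y => by rw [← mul_assoc, hUU, one_mul]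
  have habs : matAbs X = U * diagonal (fun i => (singularValues X i : ℂ)) * Uᴴ :=
    matAbs_eq_conj_diagonal X
  calc (X * U)ᴴ * (X * U) = Uᴴ * (matAbs X * matAbs X) * U := by
        rw [matAbs_mul_self, conjTranspose_mul]; simp only [mul_assoc]
    _ = _ := by
        rw [habs]
        simp only [mul_assoc, hUUY, hUU, mul_one, diagonal_mul_diagonal]
        simp [sq]

lemma traceNorm_matRpow_matAbs (p : ℝ) (X : Matrix n n ℂ) :
    traceNorm (matRpow p (matAbs X)) = ∑ i, singularValues X i ^ p := by
  set U := (posSemidef_matAbs X).1.eigenvectorUnitary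
  have hpow : matRpow p (matAbs X) =
      U * diagonal (fun i => ((singularValues X i ^ p : ℝ) : ℂ)) * (star U : Matrix n n ℂ) := by
    rw [matRpow, hermCFC, dif_pos (posSemidef_matAbs X).1]
    rfl
  have hpsd : (matRpow p (matAbs X)).PosSemidef := by
    rw [hpow]
    refine (posSemidef_diagonal_iff.mpr fun i => ?_).mul_mul_conjTranspose_same _
    exact Complex.zero_le_real.mpr (Real.rpow_nonneg (singularValues_nonneg X i) p)
  rw [traceNorm_of_posSemidef hpsd, hpow, trace_mul_cycle, Unitary.coe_star_mul_self, one_mul,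
    trace_diagonal, Complex.re_sum]
  rfl

end MatAbs

lemma norm_mul_le_one {E : Type*} [NonUnitalSeminormedRing E] {x y : E} (hx : ‖x‖ ≤ 1)
    (hy : ‖y‖ ≤ 1) : ‖x * y‖ ≤ 1 :=
  (norm_mul_le x y).trans (mul_le_one₀ hx (norm_nonneg y) hy)

section Entries

open scoped Matrix.Norms.L2Operator

variable {𝕜 m n : Type*} [RCLike 𝕜] [Fintype m] [Fintype n] [DecidableEq n]

lemma sum_norm_sq_le_l2_opNorm_sq (M : Matrix m n 𝕜) (j : n) :
    ∑ i, ‖M i j‖ ^ 2 ≤ ‖M‖ ^ 2 := by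
  have h := M.l2_opNorm_mulVec (EuclideanSpace.single j 1)
  rw [PiLp.norm_single, norm_one, mul_one] at h
  have h2 := pow_le_pow_left₀ (norm_nonneg _) h 2
  rw [EuclideanSpace.norm_sq_eq] at h2
  simpa [EuclideanSpace.single, mulVec_single] using h2

variable [DecidableEq m]

lemma sum_norm_mul_norm_le_one {R : Matrix m n 𝕜} {T : Matrix n m 𝕜} (hR : ‖R‖ ≤ 1)
    (hT : ‖T‖ ≤ 1) (i : m) : ∑ j, ‖R i j‖ * ‖T j i‖ ≤ 1 := by
  have hRrow : ∑ j, ‖R i j‖ ^ 2 ≤ 1 := by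
    have h := sum_norm_sq_le_l2_opNorm_sq Rᴴ i
    simp only [conjTranspose_apply, norm_star, l2_opNorm_conjTranspose] at h
    exact h.trans (pow_le_one₀ (norm_nonneg R) hR)
  have hTcol : ∑ j, ‖T j i‖ ^ 2 ≤ 1 :=
    (sum_norm_sq_le_l2_opNorm_sq T i).trans (pow_le_one₀ (norm_nonneg T) hT)
  calc ∑ j, ‖R i j‖ * ‖T j i‖ ≤ ∑ j, (‖R i j‖ ^ 2 + ‖T j i‖ ^ 2) / 2 :=
        Finset.sum_le_sum fun j _ => by nlinarith [sq_nonneg (‖R i j‖ - ‖T j i‖)]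
    _ ≤ 1 := by rw [← Finset.sum_div, Finset.sum_add_distrib]; linarith

end Entries

section Polar

open scoped Matrix.Norms.L2Operator

variable {n : Type*} [Fintype n] [DecidableEq n]

lemma mul_diagonal_inv_mul_self_of_conjTranspose_mul_self_eq {K : Matrix n n ℂ} {σ : n → ℝ}
    (hK : Kᴴ * K = diagonal fun i => (σ i : ℂ) ^ 2) :
    K * diagonal (fun i => (σ i : ℂ)⁻¹ * σ i) = K := by
  have hzero : (K * diagonal fun i => 1 - (σ i : ℂ)⁻¹ * σ i)ᴴ *
      (K * diagonal fun i => 1 - (σ i : ℂ)⁻¹ * σ i) = 0 := by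
    rw [conjTranspose_mul, mul_assoc, ← mul_assoc Kᴴ, hK, diagonal_conjTranspose,
      diagonal_mul_diagonal, diagonal_mul_diagonal, ← diagonal_zero]
    congr 1
    funext i
    by_cases h : σ i = 0 <;> simp [h]
  ext i j
  have hij := congrFun (congrFun (conjTranspose_mul_self_eq_zero.mp hzero) i) j
  simp only [mul_diagonal, Matrix.zero_apply] at hij ⊢
  linear_combination -hij

lemma l2_opNorm_mul_diagonal_inv_le_one_of_conjTranspose_mul_self_eq {K : Matrix n n ℂ}
    {σ : n → ℝ} (hK : Kᴴ * K = diagonal fun i => (σ i : ℂ) ^ 2) :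
    ‖K * diagonal fun i => (σ i : ℂ)⁻¹‖ ≤ 1 := by
  have hsq : ‖K * diagonal fun i => (σ i : ℂ)⁻¹‖ * ‖K * diagonal fun i => (σ i : ℂ)⁻¹‖ ≤ 1 := by
    rw [← l2_opNorm_conjTranspose_mul_self, conjTranspose_mul, mul_assoc, ← mul_assoc Kᴴ, hK,
      diagonal_conjTranspose, diagonal_mul_diagonal, diagonal_mul_diagonal, l2_opNorm_diagonal]
    refine (pi_norm_le_iff_of_nonneg zero_le_one).mpr fun i => ?_
    by_cases h : σ i = 0
    · simp [h]
    · simp only [Pi.star_apply, RCLike.star_def, map_inv₀, Complex.conj_ofReal, norm_mul, norm_inv,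
        norm_pow, Complex.norm_real, Real.norm_eq_abs]
      field_simp
      simp
  nlinarith [norm_nonneg (K * diagonal fun i => (σ i : ℂ)⁻¹)]

theorem exists_polar_decomposition (X : Matrix n n ℂ) :
    ∃ V : Matrix n n ℂ, ‖V‖ ≤ 1 ∧ V * matAbs X = X ∧ Vᴴ * X = matAbs X := by
  set U : Matrix n n ℂ := ↑(posSemidef_matAbs X).1.eigenvectorUnitary
  set σ := singularValues X
  have hU : Uᴴ ∈ unitary (Matrix n n ℂ) :=
    Unitary.star_mem (posSemidef_matAbs X).1.eigenvectorUnitary.2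
  have hUU : Uᴴ * U = 1 := Unitary.coe_star_mul_self _
  have hUUY : ∀ Y, Uᴴ * (U * Y) = Y := fun Y => by rw [← mul_assoc, hUU, one_mul]
  have hUU' : U * Uᴴ = 1 := Unitary.coe_mul_star_self _
  have habs : matAbs X = U * diagonal (fun i => (σ i : ℂ)) * Uᴴ := matAbs_eq_conj_diagonal X
  have hK := conjTranspose_mul_self_mul_eigenvectorUnitary_matAbs X
  -- `(σ i)⁻¹ = 0` when `σ i = 0`: the middle factor is the pseudo-inverse of `diagonal σ`.
  refine ⟨X * U * diagonal (fun i => (σ i : ℂ)⁻¹) * Uᴴ, ?_, ?_, ?_⟩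
  · rw [CStarRing.norm_mul_mem_unitary _ hU]
    exact l2_opNorm_mul_diagonal_inv_le_one_of_conjTranspose_mul_self_eq hK
  · calc X * U * (diagonal fun i => (σ i : ℂ)⁻¹) * Uᴴ * matAbs X
        = X * U * ((diagonal fun i => (σ i : ℂ)⁻¹) * diagonal (fun i => (σ i : ℂ))) * Uᴴ := by
          rw [habs]; simp only [mul_assoc, hUUY]
      _ = X := by
          rw [diagonal_mul_diagonal, mul_diagonal_inv_mul_self_of_conjTranspose_mul_self_eq hK,
            mul_assoc, hUU', mul_one]
  · calc (X * U * (diagonal fun i => (σ i : ℂ)⁻¹) * Uᴴ)ᴴ * X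
        = U * (diagonal fun i => (σ i : ℂ)⁻¹)ᴴ * Uᴴ * (Xᴴ * X) := by
          simp only [conjTranspose_mul, conjTranspose_conjTranspose, mul_assoc]
      _ = U * ((diagonal fun i => (σ i : ℂ)⁻¹)ᴴ * diagonal (fun i => (σ i : ℂ)) *
            diagonal (fun i => (σ i : ℂ))) * Uᴴ := by
          rw [← matAbs_mul_self, habs]; simp only [mul_assoc, hUUY]
      _ = matAbs X := by
          rw [habs, diagonal_conjTranspose, diagonal_mul_diagonal, diagonal_mul_diagonal]
          congr 3 with i
          by_cases h : σ i = 0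
          · simp [h]
          · simp [Pi.star_apply]

lemma exists_eq_mul_diagonal_singularValues_mul (X : Matrix n n ℂ) :
    ∃ K W : Matrix n n ℂ, ‖K‖ ≤ 1 ∧ W ∈ unitary (Matrix n n ℂ) ∧
      X = K * diagonal (fun i => (singularValues X i : ℂ)) * W := by
  obtain ⟨V, hV, hVX, -⟩ := exists_polar_decomposition X
  set U := (posSemidef_matAbs X).1.eigenvectorUnitary
  refine ⟨V * U, star U, ?_, (star U).2, ?_⟩
  · rwa [CStarRing.norm_mul_mem_unitary _ U.2]
  · conv_lhs => rw [← hVX, matAbs_eq_conj_diagonal]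
    simp only [Matrix.mul_assoc]
    rfl

end Polar

section Holder

variable {n : Type*} [Fintype n]

lemma sum_mul_rpow_mul_rpow_le {S : n → n → ℝ} (hS : ∀ i j, 0 ≤ S i j)
    (hrow : ∀ i, ∑ j, S i j ≤ 1) (hcol : ∀ j, ∑ i, S i j ≤ 1)
    {u v : n → ℝ} (hu : ∀ j, 0 ≤ u j) (hv : ∀ i, 0 ≤ v i) {μ : ℝ} (hμ0 : 0 < μ) (hμ1 : μ < 1) :
    ∑ i, ∑ j, S i j * (u j ^ μ * v i ^ (1 - μ)) ≤ (∑ j, u j) ^ μ * (∑ i, v i) ^ (1 - μ) := by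
  have hSu : ∑ i, ∑ j, S i j * u j ≤ ∑ j, u j := by
    rw [Finset.sum_comm]
    refine Finset.sum_le_sum fun j _ => ?_
    rw [← Finset.sum_mul]
    exact mul_le_of_le_one_left (hu j) (hcol j)
  have hSv : ∑ i, ∑ j, S i j * v i ≤ ∑ i, v i := by
    refine Finset.sum_le_sum fun i _ => ?_
    rw [← Finset.sum_mul]
    exact mul_le_of_le_one_left (hv i) (hrow i)
  have hfg : ∀ i j, (S i j * u j) ^ μ * (S i j * v i) ^ (1 - μ) =
      S i j * (u j ^ μ * v i ^ (1 - μ)) := fun i j => by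
    rw [Real.mul_rpow (hS i j) (hu j), Real.mul_rpow (hS i j) (hv i)]
    have hS1 : S i j ^ μ * S i j ^ (1 - μ) = S i j := by
      rw [← Real.rpow_add' (hS i j) (by norm_num), add_sub_cancel, Real.rpow_one]
    linear_combination (u j ^ μ * v i ^ (1 - μ)) * hS1
  have hHolder := Real.inner_le_Lp_mul_Lq_of_nonneg (Finset.univ : Finset (n × n))
    (f := fun ij => (S ij.1 ij.2 * u ij.2) ^ μ) (g := fun ij => (S ij.1 ij.2 * v ij.1) ^ (1 - μ))
    (Real.HolderConjugate.inv_one_sub_inv hμ0 hμ1)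
    (fun ij _ => Real.rpow_nonneg (mul_nonneg (hS _ _) (hu _)) _)
    (fun ij _ => Real.rpow_nonneg (mul_nonneg (hS _ _) (hv _)) _)
  simp only [Finset.univ_product_univ.symm, Finset.sum_product, hfg, one_div, inv_inv,
    Real.rpow_rpow_inv (mul_nonneg (hS _ _) (hu _)) hμ0.ne',
    Real.rpow_rpow_inv (mul_nonneg (hS _ _) (hv _)) (sub_pos.mpr hμ1).ne'] at hHolder
  have hSu0 : 0 ≤ ∑ i, ∑ j, S i j * u j :=
    Finset.sum_nonneg fun i _ => Finset.sum_nonneg fun j _ => mul_nonneg (hS i j) (hu j)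
  have hSv0 : 0 ≤ ∑ i, ∑ j, S i j * v i :=
    Finset.sum_nonneg fun i _ => Finset.sum_nonneg fun j _ => mul_nonneg (hS i j) (hv i)
  exact hHolder.trans (mul_le_mul (Real.rpow_le_rpow hSu0 hSu hμ0.le)
    (Real.rpow_le_rpow hSv0 hSv (sub_pos.mpr hμ1).le) (Real.rpow_nonneg hSv0 _)
    (Real.rpow_nonneg (hSu0.trans hSu) _))

end Holder

section TraceBounds

open scoped Matrix.Norms.L2Operator

variable {n : Type*} [Fintype n] [DecidableEq n]

lemma trace_mul_diagonal_mul_diagonal (R T : Matrix n n ℂ) (x y : n → ℂ) :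
    (R * diagonal x * T * diagonal y).trace = ∑ i, ∑ j, R i j * x j * T j i * y i := by
  simp only [trace, diag_apply, mul_diagonal, mul_apply (M := R * diagonal x), Finset.sum_mul]

lemma trace_mul_diagonal_mul_diagonal_mul_diagonal (M N P : Matrix n n ℂ) (x y w : n → ℂ) :
    (M * diagonal x * N * diagonal y * P * diagonal w).trace =
      ∑ i, ∑ j, ∑ k, M i j * x j * N j k * y k * P k i * w i := by
  simp only [trace, diag_apply, mul_diagonal, mul_apply (M := M * diagonal x * N * diagonal y),
    mul_apply (M := M * diagonal x), Finset.sum_mul]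
  exact Finset.sum_congr rfl fun i _ => Finset.sum_comm

lemma norm_trace_mul_diagonal_mul_diagonal_le {R T : Matrix n n ℂ} (hR : ‖R‖ ≤ 1) (hT : ‖T‖ ≤ 1)
    {u v : n → ℝ} (hu : ∀ j, 0 ≤ u j) (hv : ∀ i, 0 ≤ v i) {μ : ℝ} (hμ0 : 0 < μ) (hμ1 : μ < 1)
    {x y : n → ℂ} (hx : ∀ j, ‖x j‖ ≤ u j ^ μ) (hy : ∀ i, ‖y i‖ ≤ v i ^ (1 - μ)) :
    ‖(R * diagonal x * T * diagonal y).trace‖ ≤ (∑ j, u j) ^ μ * (∑ i, v i) ^ (1 - μ) := by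
  have hcol : ∀ j, ∑ i, ‖R i j‖ * ‖T j i‖ ≤ 1 := fun j => by
    simpa only [conjTranspose_apply, norm_star] using
      sum_norm_mul_norm_le_one (R := Rᴴ) (T := Tᴴ) (by rwa [l2_opNorm_conjTranspose])
        (by rwa [l2_opNorm_conjTranspose]) j
  refine le_trans ?_ (sum_mul_rpow_mul_rpow_le (fun i j => by positivity)
    (sum_norm_mul_norm_le_one hR hT) hcol hu hv hμ0 hμ1)
  rw [trace_mul_diagonal_mul_diagonal]
  refine (norm_sum_le _ _).trans (Finset.sum_le_sum fun i _ => ?_)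
  refine (norm_sum_le _ _).trans (Finset.sum_le_sum fun j _ => ?_)
  calc ‖R i j * x j * T j i * y i‖ = ‖R i j‖ * ‖T j i‖ * (‖x j‖ * ‖y i‖) := by
        simp only [norm_mul]; ring
    _ ≤ _ := mul_le_mul_of_nonneg_left
        (mul_le_mul (hx j) (hy i) (norm_nonneg _) (Real.rpow_nonneg (hu j) _)) (by positivity)

end TraceBounds

section Interpolation

open scoped Matrix.Norms.L2Operator
open Complex.HadamardThreeLines

variable {n : Type*} [Fintype n] [DecidableEq n]

/-- Unlike `(0 : ℂ) ^ w`, which is `1` at `w = 0`, this vanishes identically at `a = 0`, keeping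
`w ↦ ofRealCpow a w` entire. -/
def ofRealCpow (a : ℝ) (w : ℂ) : ℂ := if a = 0 then 0 else (a : ℂ) ^ w

lemma ofRealCpow_one (a : ℝ) : ofRealCpow a 1 = a := by
  unfold ofRealCpow
  split_ifs with h <;> simp [h]

lemma norm_ofRealCpow_le {a : ℝ} (ha : 0 ≤ a) (w : ℂ) : ‖ofRealCpow a w‖ ≤ a ^ w.re := by
  unfold ofRealCpow
  split_ifs with h
  · simpa [h] using Real.rpow_nonneg le_rfl w.re
  · exact (Complex.norm_cpow_eq_rpow_re_of_pos (lt_of_le_of_ne ha (Ne.symm h)) w).le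

lemma norm_ofRealCpow_le_max {a : ℝ} (ha : 0 ≤ a) {w : ℂ} {E : ℝ} (hw0 : 0 ≤ w.re)
    (hwE : w.re ≤ E) :
    ‖ofRealCpow a w‖ ≤ max 1 (a ^ E) := by
  refine (norm_ofRealCpow_le ha w).trans ?_
  rcases le_or_gt a 1 with h | h
  · exact le_max_of_le_left (Real.rpow_le_one ha h hw0)
  · exact le_max_of_le_right (Real.rpow_le_rpow_of_exponent_le h.le hwE)

@[fun_prop]
lemma Differentiable.ofRealCpow (a : ℝ) {f : ℂ → ℂ} (hf : Differentiable ℂ f) :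
    Differentiable ℂ fun z => ofRealCpow a (f z) := by
  unfold _root_.ofRealCpow
  split_ifs with h
  · exact differentiable_const 0
  · exact hf.const_cpow (Or.inl (Complex.ofReal_ne_zero.mpr h))

def interpolatedTrace (M N P : Matrix n n ℂ) (a b c : n → ℝ) (r t κ : ℝ) (z : ℂ) : ℂ :=
  (M * diagonal (fun i => ofRealCpow (a i) (r * κ * z)) * N * diagonal (fun i => (b i : ℂ)) * P *
    diagonal (fun i => ofRealCpow (c i) (t * κ * (1 - z)))).trace

variable (M N P : Matrix n n ℂ) (a b c : n → ℝ) (r t κ : ℝ)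

lemma interpolatedTrace_eq {θ : ℝ} (hrθ : r * κ * θ = 1) (htθ : t * κ * (1 - θ) = 1) :
    interpolatedTrace M N P a b c r t κ θ =
      (M * diagonal (fun i => (a i : ℂ)) * N * diagonal (fun i => (b i : ℂ)) * P *
        diagonal (fun i => (c i : ℂ))).trace := by
  have hrθ' : (r * κ * θ : ℂ) = 1 := by exact_mod_cast hrθ
  have htθ' : (t * κ * (1 - θ) : ℂ) = 1 := by exact_mod_cast htθ
  simp only [interpolatedTrace, hrθ', htθ', ofRealCpow_one]

lemma differentiable_interpolatedTrace :
    Differentiable ℂ (interpolatedTrace M N P a b c r t κ) := by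
  unfold interpolatedTrace
  simp only [trace_mul_diagonal_mul_diagonal_mul_diagonal]
  fun_prop

lemma bddAbove_interpolatedTrace (ha : ∀ i, 0 ≤ a i) (hc : ∀ i, 0 ≤ c i)
    (hrκ : 0 ≤ r * κ) (htκ : 0 ≤ t * κ) :
    BddAbove ((norm ∘ interpolatedTrace M N P a b c r t κ) '' verticalClosedStrip 0 1) := by
  refine ⟨∑ i, ∑ j, ∑ k, ‖M i j‖ * max 1 (a j ^ (r * κ)) * ‖N j k‖ * ‖(b k : ℂ)‖ * ‖P k i‖ *
    max 1 (c i ^ (t * κ)), ?_⟩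
  rintro _ ⟨z, ⟨hz0, hz1⟩, rfl⟩
  rw [Function.comp_apply, interpolatedTrace, trace_mul_diagonal_mul_diagonal_mul_diagonal]
  refine (norm_sum_le _ _).trans (Finset.sum_le_sum fun i _ => ?_)
  refine (norm_sum_le _ _).trans (Finset.sum_le_sum fun j _ => ?_)
  refine (norm_sum_le _ _).trans (Finset.sum_le_sum fun k _ => ?_)
  simp only [norm_mul]
  gcongr
  · refine norm_ofRealCpow_le_max (ha j) ?_ ?_ <;> simp <;> nlinarith
  · refine norm_ofRealCpow_le_max (hc i) ?_ ?_ <;> simp <;> nlinarith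

variable {M N P a b c r t κ}

lemma norm_interpolatedTrace_le_of_re_eq_zero (hM : ‖M‖ ≤ 1) (hN : ‖N‖ ≤ 1) (hP : ‖P‖ ≤ 1)
    (ha : ∀ i, 0 ≤ a i) (hb : ∀ i, 0 ≤ b i) (hc : ∀ i, 0 ≤ c i) (hκ0 : 0 < κ) (hκ1 : κ < 1)
    {s : ℝ} (hs : s * (1 - κ) = 1) {z : ℂ} (hz : z.re = 0) :
    ‖interpolatedTrace M N P a b c r t κ z‖ ≤ (∑ i, b i ^ s) ^ (1 - κ) * (∑ i, c i ^ t) ^ κ := by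
  have hα : ‖diagonal fun i => ofRealCpow (a i) (r * κ * z)‖ ≤ 1 := by
    rw [l2_opNorm_diagonal]
    refine (pi_norm_le_iff_of_nonneg zero_le_one).mpr fun i => ?_
    simpa [hz] using norm_ofRealCpow_le (ha i) (r * κ * z)
  have h := norm_trace_mul_diagonal_mul_diagonal_le (norm_mul_le_one (norm_mul_le_one hM hα) hN) hP
    (u := fun i => b i ^ s) (v := fun i => c i ^ t) (fun i => Real.rpow_nonneg (hb i) s)
    (fun i => Real.rpow_nonneg (hc i) t) (sub_pos.mpr hκ1) (sub_lt_self 1 hκ0)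
    (x := fun i => (b i : ℂ)) (y := fun i => ofRealCpow (c i) (t * κ * (1 - z)))
    (fun i => by rw [← Real.rpow_mul (hb i), hs, Real.rpow_one, Complex.norm_real,
      Real.norm_of_nonneg (hb i)])
    (fun i => by simpa [sub_sub_cancel, ← Real.rpow_mul (hc i), hz] using
      norm_ofRealCpow_le (hc i) (t * κ * (1 - z)))
  rwa [sub_sub_cancel] at h

lemma norm_interpolatedTrace_le_of_re_eq_one (hM : ‖M‖ ≤ 1) (hN : ‖N‖ ≤ 1) (hP : ‖P‖ ≤ 1)
    (ha : ∀ i, 0 ≤ a i) (hb : ∀ i, 0 ≤ b i) (hc : ∀ i, 0 ≤ c i) (hκ0 : 0 < κ) (hκ1 : κ < 1)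
    {s : ℝ} (hs : s * (1 - κ) = 1) {z : ℂ} (hz : z.re = 1) :
    ‖interpolatedTrace M N P a b c r t κ z‖ ≤ (∑ i, a i ^ r) ^ κ * (∑ i, b i ^ s) ^ (1 - κ) := by
  have hγ : ‖diagonal fun i => ofRealCpow (c i) (t * κ * (1 - z))‖ ≤ 1 := by
    rw [l2_opNorm_diagonal]
    refine (pi_norm_le_iff_of_nonneg zero_le_one).mpr fun i => ?_
    simpa [hz] using norm_ofRealCpow_le (hc i) (t * κ * (1 - z))
  set Dγ := diagonal fun i => ofRealCpow (c i) (t * κ * (1 - z))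
  have hcycle : interpolatedTrace M N P a b c r t κ z =
      (P * Dγ * M * diagonal (fun i => ofRealCpow (a i) (r * κ * z)) * N *
        diagonal fun i => (b i : ℂ)).trace := by
    rw [interpolatedTrace, Matrix.mul_assoc _ P, trace_mul_comm]
    simp only [Matrix.mul_assoc]
    rfl
  rw [hcycle]
  refine norm_trace_mul_diagonal_mul_diagonal_le (norm_mul_le_one (norm_mul_le_one hP hγ) hM) hN
    (u := fun i => a i ^ r) (v := fun i => b i ^ s) (fun i => Real.rpow_nonneg (ha i) r)
    (fun i => Real.rpow_nonneg (hb i) s) hκ0 hκ1 (fun i => ?_) (fun i => ?_)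
  · simpa [← Real.rpow_mul (ha i), hz] using norm_ofRealCpow_le (ha i) (r * κ * z)
  · rw [← Real.rpow_mul (hb i), hs, Real.rpow_one, Complex.norm_real, Real.norm_of_nonneg (hb i)]

theorem norm_trace_mul_diagonal_mul_diagonal_mul_diagonal_le (hM : ‖M‖ ≤ 1) (hN : ‖N‖ ≤ 1)
    (hP : ‖P‖ ≤ 1) (ha : ∀ i, 0 ≤ a i) (hb : ∀ i, 0 ≤ b i) (hc : ∀ i, 0 ≤ c i) {s : ℝ}
    (hr : 0 < r) (hs : 0 < s) (ht : 0 < t) (hrst : 1 / r + 1 / s + 1 / t = 1) :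
    ‖(M * diagonal (fun i => (a i : ℂ)) * N * diagonal (fun i => (b i : ℂ)) * P *
        diagonal (fun i => (c i : ℂ))).trace‖ ≤
      (∑ i, a i ^ r) ^ (1 / r) * (∑ i, b i ^ s) ^ (1 / s) * (∑ i, c i ^ t) ^ (1 / t) := by
  set κ := 1 / r + 1 / t
  set θ := 1 / r / κ
  have hκ0 : 0 < κ := by positivity
  have hκs : 1 - κ = 1 / s := by linarith
  have hκ1 : κ < 1 := by linarith [one_div_pos.mpr hs]
  have hsκ : s * (1 - κ) = 1 := by rw [hκs, mul_one_div_cancel hs.ne']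
  have hκθ : κ * θ = 1 / r := mul_div_cancel₀ _ hκ0.ne'
  have hκθ' : κ * (1 - θ) = 1 / t := by rw [mul_sub, hκθ]; ring
  have hθ : (θ : ℂ) ∈ verticalClosedStrip 0 1 := by
    refine ⟨by simp only [Complex.ofReal_re]; positivity, ?_⟩
    simp only [Complex.ofReal_re, θ]
    exact (div_le_one hκ0).mpr (by linarith [one_div_pos.mpr ht])
  have h3 := norm_le_interp_of_mem_verticalClosedStrip₀₁' _ hθ
    (differentiable_interpolatedTrace M N P a b c r t κ).diffContOnCl
    (bddAbove_interpolatedTrace M N P a b c r t κ ha hc (by positivity) (by positivity))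
    (fun z hz => norm_interpolatedTrace_le_of_re_eq_zero hM hN hP ha hb hc hκ0 hκ1 hsκ hz)
    (fun z hz => norm_interpolatedTrace_le_of_re_eq_one hM hN hP ha hb hc hκ0 hκ1 hsκ hz)
  rw [interpolatedTrace_eq M N P a b c r t κ (by rw [mul_assoc, hκθ, mul_one_div_cancel hr.ne'])
    (by rw [mul_assoc, hκθ', mul_one_div_cancel ht.ne']), Complex.ofReal_re] at h3
  refine h3.trans (le_of_eq ?_)
  have hA : 0 ≤ ∑ i, a i ^ r := Finset.sum_nonneg fun i _ => Real.rpow_nonneg (ha i) r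
  have hB : 0 ≤ ∑ i, b i ^ s := Finset.sum_nonneg fun i _ => Real.rpow_nonneg (hb i) s
  have hC : 0 ≤ ∑ i, c i ^ t := Finset.sum_nonneg fun i _ => Real.rpow_nonneg (hc i) t
  rw [Real.mul_rpow (Real.rpow_nonneg hB _) (Real.rpow_nonneg hC _),
    Real.mul_rpow (Real.rpow_nonneg hA _) (Real.rpow_nonneg hB _), ← Real.rpow_mul hB,
    ← Real.rpow_mul hC, ← Real.rpow_mul hA, ← Real.rpow_mul hB, hκθ, hκθ']
  have hsplit : (1 - κ) * (1 - θ) + (1 - κ) * θ = 1 / s := by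
    rw [← mul_add, sub_add_cancel, mul_one, hκs]
  have hBsplit := Real.rpow_add' hB (hsplit.symm ▸ (one_div_pos.mpr hs).ne')
  rw [hsplit] at hBsplit
  linear_combination -(∑ i, a i ^ r) ^ (1 / r) * (∑ i, c i ^ t) ^ (1 / t) * hBsplit

theorem norm_trace_conjTranspose_mul_le {V : Matrix n n ℂ} (hV : ‖V‖ ≤ 1) (A B C : Matrix n n ℂ)
    {r s t : ℝ} (hr : 0 < r) (hs : 0 < s) (ht : 0 < t) (hrst : 1 / r + 1 / s + 1 / t = 1) :
    ‖(Vᴴ * (A * B * C)).trace‖ ≤ (∑ i, singularValues A i ^ r) ^ (1 / r) *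
      (∑ i, singularValues B i ^ s) ^ (1 / s) * (∑ i, singularValues C i ^ t) ^ (1 / t) := by
  obtain ⟨KA, WA, hKA, hWA, hA⟩ := exists_eq_mul_diagonal_singularValues_mul A
  obtain ⟨KB, WB, hKB, hWB, hB⟩ := exists_eq_mul_diagonal_singularValues_mul B
  obtain ⟨KC, WC, hKC, hWC, hC⟩ := exists_eq_mul_diagonal_singularValues_mul C
  have hcycle : (Vᴴ * (A * B * C)).trace =
      (WC * Vᴴ * KA * diagonal (fun i => (singularValues A i : ℂ)) * (WA * KB) *
        diagonal (fun i => (singularValues B i : ℂ)) * (WB * KC) *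
        diagonal (fun i => (singularValues C i : ℂ))).trace := by
    conv_lhs => rw [hA, hB, hC]
    simp only [Matrix.mul_assoc]
    rw [trace_mul_comm WC]
    simp only [Matrix.mul_assoc]
  rw [hcycle]
  refine norm_trace_mul_diagonal_mul_diagonal_mul_diagonal_le ?_ ?_ ?_
    (singularValues_nonneg A) (singularValues_nonneg B) (singularValues_nonneg C) hr hs ht hrst
  · rw [Matrix.mul_assoc, CStarRing.norm_mem_unitary_mul _ hWC]
    exact norm_mul_le_one (by rwa [l2_opNorm_conjTranspose]) hKA
  · rwa [CStarRing.norm_mem_unitary_mul _ hWA]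
  · rwa [CStarRing.norm_mem_unitary_mul _ hWB]

end Interpolation

/-- Hölder inequality for three operators in trace norm: for `r, s, t > 0` with
`1/r + 1/s + 1/t = 1`, `‖ABC‖₁ ≤ (‖|A|^r‖₁)^{1/r} (‖|B|^s‖₁)^{1/s} (‖|C|^t‖₁)^{1/t}`. -/
theorem traceNorm_hoelder_three {d : ℕ} (A B C : Matrix (Fin d) (Fin d) ℂ)
    (r s t : ℝ) (hr : 0 < r) (hs : 0 < s) (ht : 0 < t)
    (hrst : 1 / r + 1 / s + 1 / t = 1) :
    traceNorm (A * B * C) ≤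
      (traceNorm (matRpow r (matAbs A))) ^ (1 / r) *
        (traceNorm (matRpow s (matAbs B))) ^ (1 / s) *
          (traceNorm (matRpow t (matAbs C))) ^ (1 / t) := by
  rw [traceNorm_matRpow_matAbs, traceNorm_matRpow_matAbs, traceNorm_matRpow_matAbs]
  obtain ⟨V, hV, -, hVX⟩ := exists_polar_decomposition (A * B * C)
  calc traceNorm (A * B * C) = (Vᴴ * (A * B * C)).trace.re := by rw [traceNorm, hVX]
    _ ≤ ‖(Vᴴ * (A * B * C)).trace‖ := Complex.re_le_norm _
    _ ≤ _ := norm_trace_conjTranspose_mul_le hV A B C hr hs ht hrst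
end
end

section
/- Let F be a δ-almost two-universal family of hash functions from 𝒳 to {0,1}^ℓ, let ρ_{XE} = Σ_x |x⟩⟨x| ⊗ ρ_E^{[x]} be a CQ state and τ_E a normalized state on H_E with support containing supp(ρ_E). Let ρ_{FZE} = Σ_{f,z} (1/|F|)|f⟩⟨f| ⊗ |z⟩⟨z| ⊗ Σ_{x: f(x)=z} ρ_E^{[x]} be the post-hashing state. Then Γ_C(ρ_{FZE} | ρ_F ⊗ τ_E) ≤ Γ_C(ρ_{XE} | τ_E) + δ · tr(ρ_E τ_E^{−1/2} ρ_E τ_E^{−1/2}), where Γ_C(ρ_{AB}|σ_B) := tr((ρ_{AB}(1_A ⊗ σ_B^{−1/2}))²). -/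
/-
Since `ginvSqrt (|F|⁻¹ • 1 ⊗ τ) = √|F| • (1 ⊗ ginvSqrt τ)` and the hashed state is block
diagonal, the left-hand side equals `|F|⁻¹ ∑_f ∑_z tr (S_{f,z} g S_{f,z} g)`, where
`g = ginvSqrt τ` and `S_{f,z} = ∑_{f x = z} ρ_x`. Expanding bilinearly gives
`∑_{x,x'} Pr_f[f x = f x'] t(x,x')` with `t(x,x') = re tr (ρ_x g ρ_{x'} g) ≥ 0`. Diagonal pairs
always collide and contribute `Γ_C(ρ_XE|τ)`; the others collide with probability at most `δ`
and contribute at most `δ tr (ρ_E g ρ_E g)`.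
-/

open Matrix Kronecker ComplexOrder

noncomputable section

/-- Generalized inverse square root on the support. -/
def ginvSqrt {n : Type*} [Fintype n] [DecidableEq n] (M : Matrix n n ℂ) :
    Matrix n n ℂ :=
  hermCFC (fun x => if x = 0 then 0 else (Real.sqrt x)⁻¹) M

namespace Matrix

section BlockSum

variable {R ι n : Type*} [CommSemiring R] [Fintype ι] [DecidableEq ι] [Fintype n]

theorem sum_single_kronecker_mul_one_kronecker (A : ι → Matrix n n R) (B : Matrix n n R) :
    (∑ i, single i i (1 : R) ⊗ₖ A i) * ((1 : Matrix ι ι R) ⊗ₖ B) =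
      ∑ i, single i i (1 : R) ⊗ₖ (A i * B) := by
  simp only [Finset.sum_mul, ← mul_kronecker_mul, Matrix.mul_one]

theorem sum_single_kronecker_mul_sum_single_kronecker (A B : ι → Matrix n n R) :
    (∑ i, single i i (1 : R) ⊗ₖ A i) * (∑ i, single i i (1 : R) ⊗ₖ B i) =
      ∑ i, single i i (1 : R) ⊗ₖ (A i * B i) := by
  simp only [Finset.sum_mul_sum, ← mul_kronecker_mul]
  refine Finset.sum_congr rfl fun i _ => ?_
  rw [Finset.sum_eq_single i (fun j _ hji => ?_) (by simp), single_mul_single_same, one_mul]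
  rw [single_mul_single_of_ne (h := hji.symm), zero_kronecker]

theorem trace_sum_single_kronecker (A : ι → Matrix n n R) :
    (∑ i, single i i (1 : R) ⊗ₖ A i).trace = ∑ i, (A i).trace := by
  simp [trace_sum, trace_kronecker]

theorem trace_sq_sum_single_kronecker_mul_one_kronecker [DecidableEq n] (A : ι → Matrix n n R)
    (B : Matrix n n R) :
    (((∑ i, single i i (1 : R) ⊗ₖ A i) * ((1 : Matrix ι ι R) ⊗ₖ B)) ^ 2).trace =
      ∑ i, (A i * B * (A i * B)).trace := by
  rw [sum_single_kronecker_mul_one_kronecker, sq, sum_single_kronecker_mul_sum_single_kronecker,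
    trace_sum_single_kronecker]

end BlockSum

theorem trace_sum_mul_mul_sum_mul {R α n : Type*} [NonUnitalSemiring R] [Fintype n]
    (s t : Finset α) (A B : α → Matrix n n R) (g : Matrix n n R) :
    ((∑ x ∈ s, A x) * g * ((∑ y ∈ t, B y) * g)).trace =
      ∑ x ∈ s, ∑ y ∈ t, (A x * g * (B y * g)).trace := by
  simp only [Finset.sum_mul, Finset.mul_sum, trace_sum]
  exact Finset.sum_comm

open scoped MatrixOrder in
/-- Writing `A = Xᴴ X` and `B = Yᴴ Y`, the trace is `tr (W Wᴴ)` for `W = X g Yᴴ`. -/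
theorem re_trace_mul_mul_mul_nonneg {n : Type*} [Fintype n] {A B g : Matrix n n ℂ}
    (hA : A.PosSemidef) (hB : B.PosSemidef) (hg : g.IsHermitian) :
    0 ≤ (A * g * (B * g)).trace.re := by
  classical
  obtain ⟨X, rfl⟩ := CStarAlgebra.nonneg_iff_eq_star_mul_self.mp hA.nonneg
  obtain ⟨Y, rfl⟩ := CStarAlgebra.nonneg_iff_eq_star_mul_self.mp hB.nonneg
  have hcycle : (star X * X * g * (star Y * Y * g)).trace =
      (X * g * Yᴴ * (X * g * Yᴴ)ᴴ).trace := by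
    simp only [star_eq_conjTranspose, conjTranspose_mul, conjTranspose_conjTranspose, hg.eq,
      Matrix.mul_assoc]
    rw [trace_mul_comm]
    simp only [Matrix.mul_assoc]
  rw [hcycle]
  exact (Complex.le_def.mp (posSemidef_self_mul_conjTranspose _).trace_nonneg).1

def oneKroneckerStarAlgHom (l n : Type*) [Fintype l] [DecidableEq l] [Fintype n]
    [DecidableEq n] : Matrix n n ℂ →⋆ₐ[ℂ] Matrix (l × n) (l × n) ℂ where
  toFun A := (1 : Matrix l l ℂ) ⊗ₖ A
  map_one' := one_kronecker_one
  map_mul' A B := by rw [← mul_kronecker_mul, Matrix.one_mul]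
  map_zero' := kronecker_zero _
  map_add' := kronecker_add _
  commutes' c := by simp only [Algebra.algebraMap_eq_smul_one, kronecker_smul, one_kronecker_one]
  map_star' A := by simp only [star_eq_conjTranspose, conjTranspose_kronecker, conjTranspose_one]

theorem continuous_oneKroneckerStarAlgHom (l n : Type*) [Fintype l] [DecidableEq l] [Fintype n]
    [DecidableEq n] : Continuous (oneKroneckerStarAlgHom l n) :=
  (oneKroneckerStarAlgHom l n).toAlgHom.toLinearMap.continuous_of_finiteDimensional

end Matrix

section FunctionalCalculus

variable {n : Type*} [Fintype n] [DecidableEq n]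

theorem hermCFC_of_isHermitian (f : ℝ → ℝ) {M : Matrix n n ℂ} (hM : M.IsHermitian) :
    hermCFC f M = cfc f M := by
  rw [hermCFC, dif_pos hM, hM.cfc_eq]

theorem isHermitian_hermCFC (f : ℝ → ℝ) (M : Matrix n n ℂ) : (hermCFC f M).IsHermitian := by
  by_cases hM : M.IsHermitian
  · rw [hermCFC_of_isHermitian f hM]
    exact cfc_predicate f M
  · rw [hermCFC, dif_neg hM]
    exact isHermitian_zero

theorem hermCFC_const_mul (c : ℝ) (f : ℝ → ℝ) (M : Matrix n n ℂ) :
    hermCFC (fun x => c * f x) M = c • hermCFC f M := by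
  by_cases hM : M.IsHermitian
  · rw [hermCFC_of_isHermitian _ hM, hermCFC_of_isHermitian _ hM,
      cfc_const_mul c f M (Matrix.finite_real_spectrum.continuousOn f)]
  · simp only [hermCFC, dif_neg hM, smul_zero]

theorem hermCFC_real_smul (f : ℝ → ℝ) (r : ℝ) {M : Matrix n n ℂ} (hM : M.IsHermitian) :
    hermCFC f (r • M) = hermCFC (fun x => f (r * x)) M := by
  rw [hermCFC_of_isHermitian _ (hM.smul (IsSelfAdjoint.all r)), hermCFC_of_isHermitian _ hM,
    ← cfc_comp_smul r f M ((Matrix.finite_real_spectrum.image _).continuousOn f)]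
  rfl

theorem hermCFC_one_kronecker {l : Type*} [Fintype l] [DecidableEq l] (f : ℝ → ℝ)
    {M : Matrix n n ℂ} (hM : M.IsHermitian) :
    hermCFC f ((1 : Matrix l l ℂ) ⊗ₖ M) = (1 : Matrix l l ℂ) ⊗ₖ hermCFC f M := by
  have h1M : ((1 : Matrix l l ℂ) ⊗ₖ M).IsHermitian :=
    IsSelfAdjoint.map hM (oneKroneckerStarAlgHom l n)
  rw [hermCFC_of_isHermitian f h1M, hermCFC_of_isHermitian f hM]
  exact ((oneKroneckerStarAlgHom l n).map_cfc f M (Matrix.finite_real_spectrum.continuousOn f)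
    (continuous_oneKroneckerStarAlgHom l n) hM h1M).symm

theorem ginvSqrt_real_smul {r : ℝ} (hr : 0 < r) {M : Matrix n n ℂ} (hM : M.IsHermitian) :
    ginvSqrt (r • M) = (√r)⁻¹ • ginvSqrt M := by
  rw [ginvSqrt, hermCFC_real_smul _ r hM, ginvSqrt, ← hermCFC_const_mul]
  congr 1
  funext x
  by_cases hx : x = 0
  · simp [hx]
  · simp [hx, hr.ne', Real.sqrt_mul hr.le, mul_comm]

theorem ginvSqrt_smul_one_kronecker {l : Type*} [Fintype l] [DecidableEq l] {r : ℝ} (hr : 0 < r)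
    {M : Matrix n n ℂ} (hM : M.IsHermitian) :
    ginvSqrt (((r : ℂ) • (1 : Matrix l l ℂ)) ⊗ₖ M) =
      (√r)⁻¹ • ((1 : Matrix l l ℂ) ⊗ₖ ginvSqrt M) := by
  rw [smul_kronecker, ← kronecker_smul, Complex.coe_smul, ginvSqrt, hermCFC_one_kronecker _
    (hM.smul (IsSelfAdjoint.all r)), ← ginvSqrt, ginvSqrt_real_smul hr hM, kronecker_smul]

end FunctionalCalculus

open Finset

section Collisions

variable {𝒳 F Z : Type*} [Fintype F] [DecidableEq Z]

theorem card_filter_div_card_le {δ : ℝ} (hδ : 0 ≤ δ) (hash : F → 𝒳 → Z)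
    (htu : ∀ x x' : 𝒳, x ≠ x' →
      ((univ.filter (fun f : F => hash f x = hash f x')).card : ℝ) / (Fintype.card F : ℝ) ≤ δ)
    (x x' : 𝒳) [Decidable (x = x')] :
    ((univ.filter (fun f : F => hash f x = hash f x')).card : ℝ) / (Fintype.card F : ℝ) ≤
      (if x = x' then 1 else 0) + δ := by
  split_ifs with hxx'
  · refine le_add_of_le_of_nonneg (div_le_one_of_le₀ ?_ (Nat.cast_nonneg _)) hδ
    exact_mod_cast card_filter_le _ _
  · simpa using htu x x' hxx'

theorem inv_card_mul_sum_collisions_le [Fintype 𝒳] {δ : ℝ} (hδ : 0 ≤ δ) (hash : F → 𝒳 → Z)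
    (htu : ∀ x x' : 𝒳, x ≠ x' →
      ((univ.filter (fun f : F => hash f x = hash f x')).card : ℝ) / (Fintype.card F : ℝ) ≤ δ)
    {t : 𝒳 → 𝒳 → ℝ} (ht : ∀ x x', 0 ≤ t x x') :
    (Fintype.card F : ℝ)⁻¹ * ∑ f, ∑ x, ∑ x', (if hash f x = hash f x' then t x x' else 0) ≤
      ∑ x, t x x + δ * ∑ x, ∑ x', t x x' := by
  classical
  have hcount : ∀ x x', ∑ f, (if hash f x = hash f x' then t x x' else 0) =
      (univ.filter (fun f : F => hash f x = hash f x')).card * t x x' := fun x x' => by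
    rw [← sum_filter, sum_const, nsmul_eq_mul]
  calc _ = ∑ x, ∑ x', ((univ.filter (fun f : F => hash f x = hash f x')).card : ℝ) /
        (Fintype.card F : ℝ) * t x x' := by
        simp only [sum_comm (s := (univ : Finset F)), hcount, mul_sum, div_eq_inv_mul, mul_assoc]
    _ ≤ ∑ x, ∑ x', ((if x = x' then 1 else 0) + δ) * t x x' := by
        gcongr with x _ x' _
        · exact ht x x'
        · exact card_filter_div_card_le hδ hash htu x x'
    _ = _ := by simp [add_mul, sum_add_distrib, mul_sum]

end Collisions

section Fibers

variable {𝒳 Z : Type*} [Fintype 𝒳] [Fintype Z] [DecidableEq Z]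

theorem sum_sum_fiber_sum_fiber {M : Type*} [AddCommMonoid M] (h : 𝒳 → Z)
    (t : 𝒳 → 𝒳 → M) :
    ∑ z, ∑ x ∈ univ.filter (fun x => h x = z), ∑ x' ∈ univ.filter (fun x => h x = z),
        t x x' =
      ∑ x, ∑ x', if h x = h x' then t x x' else 0 := by
  calc _ = ∑ z, ∑ x ∈ univ.filter (fun x => h x = z),
        ∑ x' ∈ univ.filter (fun x' => h x' = h x), t x x' :=
        sum_congr rfl fun z _ => sum_congr rfl fun x hx => by rw [(mem_filter.mp hx).2]
    _ = ∑ x, ∑ x' ∈ univ.filter (fun x' => h x' = h x), t x x' := sum_fiberwise univ h _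
    _ = _ := by simp only [sum_filter, eq_comm]

theorem sum_re_trace_fiber_mul_sq {n : Type*} [Fintype n] (h : 𝒳 → Z)
    (ρ : 𝒳 → Matrix n n ℂ) (g : Matrix n n ℂ) :
    ∑ z, ((∑ x ∈ univ.filter (fun x => h x = z), ρ x) * g *
        ((∑ x ∈ univ.filter (fun x => h x = z), ρ x) * g)).trace.re =
      ∑ x, ∑ x', if h x = h x' then (ρ x * g * (ρ x' * g)).trace.re else 0 := by
  simp only [trace_sum_mul_mul_sum_mul, Complex.re_sum]
  exact sum_sum_fiber_sum_fiber h _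

end Fibers

section HashedState

variable {𝒳 F Z n : Type*} [Fintype 𝒳] [Fintype F] [DecidableEq F] [Fintype Z]
  [DecidableEq Z] [Fintype n] [DecidableEq n]

theorem re_trace_sq_smul_mul_ginvSqrt_smul_one_kronecker {ι : Type*} [Fintype ι]
    [DecidableEq ι] {c : ℝ} (hc : 0 < c) (X : Matrix (ι × n) (ι × n) ℂ) {τ : Matrix n n ℂ}
    (hτ : τ.IsHermitian) :
    ((((c : ℂ) • X) * ginvSqrt (((c : ℂ) • (1 : Matrix ι ι ℂ)) ⊗ₖ τ)) ^ 2).trace.re =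
      c * ((X * ((1 : Matrix ι ι ℂ) ⊗ₖ ginvSqrt τ)) ^ 2).trace.re := by
  have hscalar : (c * (√c)⁻¹) ^ 2 = c := by
    rw [mul_pow, inv_pow, Real.sq_sqrt hc.le, sq, mul_assoc, mul_inv_cancel₀ hc.ne', mul_one]
  rw [ginvSqrt_smul_one_kronecker hc hτ, Complex.coe_smul, smul_mul_smul_comm, smul_pow, hscalar,
    trace_smul, Complex.smul_re, smul_eq_mul]

theorem re_trace_sq_hashed_mul_ginvSqrt [Nonempty F] (hash : F → 𝒳 → Z)
    (ρ : 𝒳 → Matrix n n ℂ) {τ : Matrix n n ℂ} (hτ : τ.IsHermitian) :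
    ((((∑ f : F, ∑ z : Z, ((Fintype.card F : ℂ))⁻¹ •
          (single (f, z) (f, z) (1 : ℂ) ⊗ₖ
            (∑ x ∈ univ.filter (fun x => hash f x = z), ρ x))) *
        ginvSqrt ((((Fintype.card F : ℂ))⁻¹ • (1 : Matrix (F × Z) (F × Z) ℂ)) ⊗ₖ τ))
          ^ 2).trace).re =
      (Fintype.card F : ℝ)⁻¹ * ∑ f, ∑ x, ∑ x',
        if hash f x = hash f x' then (ρ x * ginvSqrt τ * (ρ x' * ginvSqrt τ)).trace.re else 0 := by
  set c : ℝ := (Fintype.card F : ℝ)⁻¹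
  have hcast : ((Fintype.card F : ℂ))⁻¹ = (c : ℂ) := by simp [c]
  have hstate : ∑ f : F, ∑ z : Z, (c : ℂ) •
        (single (f, z) (f, z) (1 : ℂ) ⊗ₖ (∑ x ∈ univ.filter (fun x => hash f x = z), ρ x)) =
      (c : ℂ) • ∑ p : F × Z,
        single p p (1 : ℂ) ⊗ₖ (∑ x ∈ univ.filter (fun x => hash p.1 x = p.2), ρ x) := by
    rw [Fintype.sum_prod_type, smul_sum]
    simp only [smul_sum]
  rw [hcast, hstate, re_trace_sq_smul_mul_ginvSqrt_smul_one_kronecker (by positivity) _ hτ,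
    trace_sq_sum_single_kronecker_mul_one_kronecker, Complex.re_sum, Fintype.sum_prod_type]
  simp only [sum_re_trace_fiber_mul_sq]

end HashedState

theorem collision_entropy_hashing_bound_general
    {𝒳 F : Type*} [Fintype 𝒳] [DecidableEq 𝒳] [Fintype F] [DecidableEq F]
    [Nonempty F] {ℓ dE : ℕ} (δ : ℝ) (hδ : 0 ≤ δ)
    (hash : F → 𝒳 → (Fin ℓ → Bool))
    (htu : ∀ x x' : 𝒳, x ≠ x' →
      ((Finset.univ.filter (fun f : F => hash f x = hash f x')).card : ℝ) /
        (Fintype.card F : ℝ) ≤ δ)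
    (ρE : 𝒳 → Matrix (Fin dE) (Fin dE) ℂ) (hρE : ∀ x, (ρE x).PosSemidef)
    (τE : Matrix (Fin dE) (Fin dE) ℂ) (hτE : τE.PosSemidef) :
    ((((∑ f : F, ∑ z : Fin ℓ → Bool, ((Fintype.card F : ℂ))⁻¹ •
          (Matrix.single (f, z) (f, z) (1 : ℂ) ⊗ₖ
            (∑ x ∈ Finset.univ.filter (fun x => hash f x = z), ρE x))) *
        ginvSqrt ((((Fintype.card F : ℂ))⁻¹ •
          (1 : Matrix ((F × (Fin ℓ → Bool))) ((F × (Fin ℓ → Bool))) ℂ)) ⊗ₖ τE)) ^ 2).trace).re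
      ≤ ((((∑ x : 𝒳, Matrix.single x x (1 : ℂ) ⊗ₖ ρE x) *
            ((1 : Matrix 𝒳 𝒳 ℂ) ⊗ₖ ginvSqrt τE)) ^ 2).trace).re +
        δ * (((∑ x : 𝒳, ρE x) * ginvSqrt τE * (∑ x : 𝒳, ρE x) * ginvSqrt τE).trace).re := by
  set g := ginvSqrt τE
  have hXE : ((((∑ x : 𝒳, single x x (1 : ℂ) ⊗ₖ ρE x) * ((1 : Matrix 𝒳 𝒳 ℂ) ⊗ₖ g))
      ^ 2).trace).re = ∑ x, (ρE x * g * (ρE x * g)).trace.re := by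
    rw [trace_sq_sum_single_kronecker_mul_one_kronecker, Complex.re_sum]
  have hE : (((∑ x : 𝒳, ρE x) * g * (∑ x : 𝒳, ρE x) * g).trace).re =
      ∑ x, ∑ x', (ρE x * g * (ρE x' * g)).trace.re := by
    rw [Matrix.mul_assoc _ (∑ x, ρE x), trace_sum_mul_mul_sum_mul]
    simp only [Complex.re_sum]
  rw [re_trace_sq_hashed_mul_ginvSqrt hash ρE hτE.isHermitian, hXE, hE]
  exact inv_card_mul_sum_collisions_le hδ hash htu fun x x' =>
    re_trace_mul_mul_mul_nonneg (hρE x) (hρE x') (isHermitian_hermCFC _ _)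

/-- Collision-entropy bound for δ-almost two-universal hashing of a CQ state:
`Γ_C(ρ_{FZE} | ρ_F ⊗ τ_E) ≤ Γ_C(ρ_{XE} | τ_E) + δ tr(ρ_E τ_E^{−1/2} ρ_E τ_E^{−1/2})`,
where `Γ_C(ρ_{AB}|σ_B) = tr((ρ_{AB}(1_A ⊗ σ_B^{−1/2}))²)`, `ρ_{XE} = Σ_x |x⟩⟨x| ⊗ ρ_E^{[x]}`
and `ρ_{FZE} = Σ_{f,z} |F|⁻¹ |f,z⟩⟨f,z| ⊗ Σ_{x : f(x)=z} ρ_E^{[x]}`. -/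
theorem collision_entropy_hashing_bound
    {𝒳 F : Type*} [Fintype 𝒳] [DecidableEq 𝒳] [Fintype F] [DecidableEq F]
    [Nonempty F] {ℓ dE : ℕ} (δ : ℝ) (hδ : 0 ≤ δ)
    (hash : F → 𝒳 → (Fin ℓ → Bool))
    (htu : ∀ x x' : 𝒳, x ≠ x' →
      ((Finset.univ.filter (fun f : F => hash f x = hash f x')).card : ℝ) /
        (Fintype.card F : ℝ) ≤ δ)
    (ρE : 𝒳 → Matrix (Fin dE) (Fin dE) ℂ) (hρE : ∀ x, (ρE x).PosSemidef)
    (τE : Matrix (Fin dE) (Fin dE) ℂ) (hτE : τE.PosSemidef) (hτtr : τE.trace = 1)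
    (hsupp : ∀ v : Fin dE → ℂ, τE.mulVec v = 0 → (∑ x : 𝒳, ρE x).mulVec v = 0) :
    ((((∑ f : F, ∑ z : Fin ℓ → Bool, ((Fintype.card F : ℂ))⁻¹ •
          (Matrix.single (f, z) (f, z) (1 : ℂ) ⊗ₖ
            (∑ x ∈ Finset.univ.filter (fun x => hash f x = z), ρE x))) *
        ginvSqrt ((((Fintype.card F : ℂ))⁻¹ •
          (1 : Matrix ((F × (Fin ℓ → Bool))) ((F × (Fin ℓ → Bool))) ℂ)) ⊗ₖ τE)) ^ 2).trace).re
      ≤ ((((∑ x : 𝒳, Matrix.single x x (1 : ℂ) ⊗ₖ ρE x) *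
            ((1 : Matrix 𝒳 𝒳 ℂ) ⊗ₖ ginvSqrt τE)) ^ 2).trace).re +
        δ * (((∑ x : 𝒳, ρE x) * ginvSqrt τE * (∑ x : 𝒳, ρE x) * ginvSqrt τE).trace).re :=
  collision_entropy_hashing_bound_general δ hδ hash htu ρE hρE τE hτE
end
end

section
/- For a subnormalized bipartite state ρ_{AB} and a normalized state σ_B, the max relative entropy satisfies D_max(ρ_{AB} ‖ 1_A ⊗ σ_B) ≥ log Γ_C(ρ_{AB}|σ_B) − log tr(ρ_{AB}), where Γ_C(ρ_{AB}|σ_B) = tr((ρ_{AB}(1_A ⊗ σ_B^{−1/2}))²) and D_max(ρ‖τ) = inf{λ ∈ ℝ : ρ ≤ 2^λ τ}. -/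
open Matrix Kronecker ComplexOrder

noncomputable section

/-- The max relative entropy `D_max(ρ‖τ) = inf{λ : ρ ≤ 2^λ τ}` (Löwner order). -/
def Dmax {n : Type*} [Fintype n] [DecidableEq n] (ρ τ : Matrix n n ℂ) : ℝ :=
  sInf {lam : ℝ | ((((2 : ℝ) ^ lam : ℝ) : ℂ) • τ - ρ).PosSemidef}

/-!
Put `τ = 1 ⊗ σ` and `M = 1 ⊗ σ^{-1/2}`; then `τ M τ M = τ`, so `P = M τ M` acts as the identity
on the support of `τ`. If `ρ ≤ c τ`, compressing by `1 - P` kills the right-hand side, hence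
`ρ (1 - P) = 0`, i.e. `ρ P = ρ`. With `Y = M ρ M ≥ 0`, positivity of `tr((c τ - ρ) Y)` gives
`Γ = tr(ρ Y) ≤ c tr(τ Y) = c tr(ρ P) = c tr ρ`, and `Γ > 0`: `Γ = 0` would force `ρ M ρ = 0`,
hence `M ρ = 0` and `ρ = ρ M τ M = 0`. Taking `log₂` with `c = 2^λ` and the infimum over the
feasible `λ` gives the bound.
-/

open scoped MatrixOrder

namespace Matrix

variable {n : Type*} [Fintype n] [DecidableEq n]

lemma trace_sqrt_mul_mul_sqrt (A B : Matrix n n ℂ) (hB : 0 ≤ B) :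
    (CFC.sqrt B * A * CFC.sqrt B).trace = (A * B).trace := by
  rw [Matrix.mul_assoc, trace_mul_comm, Matrix.mul_assoc, CFC.sqrt_mul_sqrt_self B]

lemma mul_eq_zero_of_conjTranspose_mul_mul_eq_zero {A B : Matrix n n ℂ} (hA : 0 ≤ A)
    (h : Bᴴ * A * B = 0) : A * B = 0 := by
  have hs : (CFC.sqrt A * B)ᴴ * (CFC.sqrt A * B) = Bᴴ * A * B := by
    rw [conjTranspose_mul, (CFC.sqrt_nonneg A).posSemidef.1.eq, Matrix.mul_assoc,
      ← Matrix.mul_assoc (CFC.sqrt A), CFC.sqrt_mul_sqrt_self A, Matrix.mul_assoc]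
  have h0 : CFC.sqrt A * B = 0 := conjTranspose_mul_self_eq_zero.mp (hs.trans h)
  rw [← CFC.sqrt_mul_sqrt_self A, Matrix.mul_assoc, h0, Matrix.mul_zero]

lemma trace_mul_nonneg {A B : Matrix n n ℂ} (hA : 0 ≤ A) (hB : 0 ≤ B) :
    0 ≤ (A * B).trace := by
  rw [← trace_sqrt_mul_mul_sqrt A B hB]
  exact (conjugate_nonneg_of_nonneg hA (CFC.sqrt_nonneg B)).posSemidef.trace_nonneg

lemma mul_eq_zero_of_trace_mul_eq_zero {A B : Matrix n n ℂ} (hA : 0 ≤ A) (hB : 0 ≤ B)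
    (h : (A * B).trace = 0) : A * B = 0 := by
  have hconj : (CFC.sqrt B)ᴴ * A * CFC.sqrt B = 0 := by
    rw [(CFC.sqrt_nonneg B).posSemidef.1.eq,
      ← (conjugate_nonneg_of_nonneg hA (CFC.sqrt_nonneg B)).posSemidef.trace_eq_zero_iff,
      trace_sqrt_mul_mul_sqrt A B hB, h]
  rw [← CFC.sqrt_mul_sqrt_self B, ← Matrix.mul_assoc,
    mul_eq_zero_of_conjTranspose_mul_mul_eq_zero hA hconj, Matrix.zero_mul]

lemma mul_eq_zero_of_le_smul {ρ τ Q : Matrix n n ℂ} {c : ℂ} (hρ : 0 ≤ ρ) (hρτ : ρ ≤ c • τ)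
    (hQ : τ * Q = 0) : ρ * Q = 0 := by
  refine mul_eq_zero_of_conjTranspose_mul_mul_eq_zero hρ (le_antisymm ?_ ?_)
  · calc Qᴴ * ρ * Q ≤ Qᴴ * (c • τ) * Q := star_left_conjugate_le_conjugate hρτ Q
      _ = 0 := by
        rw [Matrix.mul_smul, Matrix.smul_mul, Matrix.mul_assoc, hQ, Matrix.mul_zero, smul_zero]
  · exact star_left_conjugate_nonneg hρ Q

section Support

variable {ρ τ M : Matrix n n ℂ} {c : ℂ}

lemma mul_mul_mul_eq_self_of_le_smul (hρ : 0 ≤ ρ) (hρτ : ρ ≤ c • τ)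
    (hτM : τ * M * τ * M = τ) : ρ * (M * τ * M) = ρ := by
  have hker : τ * (1 - M * τ * M) = 0 := by
    rw [Matrix.mul_sub, Matrix.mul_one, ← Matrix.mul_assoc, ← Matrix.mul_assoc, hτM, sub_self]
  have := mul_eq_zero_of_le_smul hρ hρτ hker
  rwa [Matrix.mul_sub, Matrix.mul_one, sub_eq_zero, eq_comm] at this

lemma trace_mul_sq_le (hρ : 0 ≤ ρ) (hM : 0 ≤ M) (hρτ : ρ ≤ c • τ)
    (hτM : τ * M * τ * M = τ) : ((ρ * M) ^ 2).trace ≤ c * ρ.trace := by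
  have hτY : (τ * (M * ρ * M)).trace = ρ.trace :=
    calc (τ * (M * ρ * M)).trace = (M * τ * M * ρ).trace := by
          rw [trace_mul_comm, Matrix.mul_assoc, trace_mul_comm]
          simp only [Matrix.mul_assoc]
      _ = ρ.trace := by rw [trace_mul_comm, mul_mul_mul_eq_self_of_le_smul hρ hρτ hτM]
  have := trace_mul_nonneg (sub_nonneg.mpr hρτ) (conjugate_nonneg_of_nonneg hρ hM)
  rw [Matrix.sub_mul, trace_sub, Matrix.smul_mul, trace_smul, hτY, sub_nonneg] at this
  simpa only [pow_two, Matrix.mul_assoc, smul_eq_mul] using this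

lemma trace_mul_sq_pos (hρ : 0 ≤ ρ) (hM : 0 ≤ M) (hρτ : ρ ≤ c • τ)
    (hτM : τ * M * τ * M = τ) (hρ0 : ρ ≠ 0) : 0 < ((ρ * M) ^ 2).trace := by
  have hY : 0 ≤ M * ρ * M := conjugate_nonneg_of_nonneg hρ hM
  have hsq : (ρ * M) ^ 2 = ρ * (M * ρ * M) := by simp only [pow_two, Matrix.mul_assoc]
  have hsupp := mul_mul_mul_eq_self_of_le_smul hρ hρτ hτM
  refine lt_of_le_of_ne (hsq ▸ trace_mul_nonneg hρ hY) fun h => hρ0 ?_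
  have hρY : ρ * (M * ρ * M) = 0 := mul_eq_zero_of_trace_mul_eq_zero hρ hY (hsq ▸ h.symm)
  have hρMρ : ρᴴ * M * ρ = 0 := by
    calc ρᴴ * M * ρ = ρ * M * (ρ * (M * τ * M)) := by rw [hsupp, hρ.posSemidef.1.eq]
      _ = ρ * (M * ρ * M) * τ * M := by simp only [Matrix.mul_assoc]
      _ = 0 := by rw [hρY, Matrix.zero_mul, Matrix.zero_mul]
  have hMρ : M * ρ = 0 := mul_eq_zero_of_conjTranspose_mul_mul_eq_zero hM hρMρ
  have hρM : ρ * M = 0 := by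
    rw [← hρ.posSemidef.1.eq, ← hM.posSemidef.1.eq, ← conjTranspose_mul, hMρ, conjTranspose_zero]
  rw [← hsupp, ← Matrix.mul_assoc, ← Matrix.mul_assoc, hρM, Matrix.zero_mul, Matrix.zero_mul]

end Support

end Matrix

section GeneralizedInverseSqrt

variable {n : Type*} [Fintype n] [DecidableEq n]

-- The case split in `ginvSqrt` is redundant: `(√0)⁻¹ = 0⁻¹ = 0` already.
lemma ginvSqrt_eq_cfc {σ : Matrix n n ℂ} (hσ : σ.IsHermitian) :
    ginvSqrt σ = cfc (fun x => (√x)⁻¹) σ := by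
  rw [ginvSqrt, hermCFC, dif_pos hσ, hσ.cfc_eq]
  congr 1
  funext x
  split_ifs with hx <;> simp [hx]

lemma ginvSqrt_nonneg (σ : Matrix n n ℂ) : 0 ≤ ginvSqrt σ := by
  by_cases hσ : σ.IsHermitian
  · rw [ginvSqrt_eq_cfc hσ]
    exact cfc_nonneg fun x _ => by positivity
  · simp [ginvSqrt, hermCFC, hσ]

lemma mul_ginvSqrt_mul_mul_ginvSqrt {σ : Matrix n n ℂ} (hσ : 0 ≤ σ) :
    σ * ginvSqrt σ * σ * ginvSqrt σ = σ := by
  have hcont (f : ℝ → ℝ) : ContinuousOn f (spectrum ℝ σ) :=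
    σ.finite_real_spectrum.continuousOn f
  rw [ginvSqrt_eq_cfc hσ.posSemidef.1]
  calc σ * cfc (fun x => (√x)⁻¹) σ * σ * cfc (fun x => (√x)⁻¹) σ
      = cfc (fun x => x * (√x)⁻¹ * x * (√x)⁻¹) σ := by
        rw [cfc_mul _ _ _ (hcont _) (hcont _), cfc_mul _ _ _ (hcont _) (hcont _),
          cfc_mul _ _ _ (hcont _) (hcont _), cfc_id' ℝ σ]
    _ = cfc (fun x => x) σ := cfc_congr fun x hx => by
        obtain rfl | hpos := (spectrum_nonneg_of_nonneg hσ hx).eq_or_lt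
        · simp
        · have hsqrt : √x ≠ 0 := (Real.sqrt_pos.mpr hpos).ne'
          field_simp
          rw [Real.sq_sqrt hpos.le]
    _ = σ := cfc_id' ℝ σ

end GeneralizedInverseSqrt

theorem dmax_ge_log_collision_general {dA dB : ℕ}
    (ρAB : Matrix (Fin dA × Fin dB) (Fin dA × Fin dB) ℂ)
    (hρAB : ρAB.PosSemidef) (htr : 0 < ρAB.trace.re)
    (σB : Matrix (Fin dB) (Fin dB) ℂ) (hσB : σB.PosSemidef)
    (hfeas : {lam : ℝ | ((((2 : ℝ) ^ lam : ℝ) : ℂ) •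
        ((1 : Matrix (Fin dA) (Fin dA) ℂ) ⊗ₖ σB) - ρAB).PosSemidef}.Nonempty) :
    Real.logb 2
        (((ρAB * ((1 : Matrix (Fin dA) (Fin dA) ℂ) ⊗ₖ ginvSqrt σB)) ^ 2).trace.re) -
      Real.logb 2 (ρAB.trace.re)
    ≤ Dmax ρAB ((1 : Matrix (Fin dA) (Fin dA) ℂ) ⊗ₖ σB) := by
  set τ := (1 : Matrix (Fin dA) (Fin dA) ℂ) ⊗ₖ σB
  set M := (1 : Matrix (Fin dA) (Fin dA) ℂ) ⊗ₖ ginvSqrt σB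
  have hM : 0 ≤ M := (PosSemidef.one.kronecker (ginvSqrt_nonneg σB).posSemidef).nonneg
  have hτM : τ * M * τ * M = τ := by
    simp only [τ, M, ← mul_kronecker_mul, one_mul, mul_ginvSqrt_mul_mul_ginvSqrt hσB.nonneg]
  have hρ0 : ρAB ≠ 0 := by rintro rfl; simp at htr
  refine le_csInf hfeas fun lam (hlam : ρAB ≤ _) => ?_
  have hpos := Complex.pos_iff.mp (trace_mul_sq_pos hρAB.nonneg hM hlam hτM hρ0)
  have hle := Complex.le_def.mp (trace_mul_sq_le hρAB.nonneg hM hlam hτM)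
  rw [Complex.re_ofReal_mul] at hle
  rw [sub_le_iff_le_add, ← Real.logb_rpow (b := 2) (x := lam) (by norm_num) (by norm_num),
    ← Real.logb_mul (by positivity) htr.ne']
  exact Real.logb_le_logb_of_le (by norm_num) hpos.1 hle.1

/-- `D_max(ρ_{AB}‖1_A ⊗ σ_B) ≥ log₂ Γ_C(ρ_{AB}|σ_B) − log₂ tr ρ_{AB}`, where
`Γ_C(ρ_{AB}|σ_B) = tr((ρ_{AB}(1_A ⊗ σ_B^{−1/2}))²)`. -/
theorem dmax_ge_log_collision {dA dB : ℕ}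
    (ρAB : Matrix (Fin dA × Fin dB) (Fin dA × Fin dB) ℂ)
    (hρAB : ρAB.PosSemidef) (htr : 0 < ρAB.trace.re) (htr1 : ρAB.trace.re ≤ 1)
    (σB : Matrix (Fin dB) (Fin dB) ℂ) (hσB : σB.PosSemidef) (hσtr : σB.trace = 1)
    (hfeas : {lam : ℝ | ((((2 : ℝ) ^ lam : ℝ) : ℂ) •
        ((1 : Matrix (Fin dA) (Fin dA) ℂ) ⊗ₖ σB) - ρAB).PosSemidef}.Nonempty) :
    Real.logb 2
        (((ρAB * ((1 : Matrix (Fin dA) (Fin dA) ℂ) ⊗ₖ ginvSqrt σB)) ^ 2).trace.re) -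
      Real.logb 2 (ρAB.trace.re)
    ≤ Dmax ρAB ((1 : Matrix (Fin dA) (Fin dA) ℂ) ⊗ₖ σB) :=
  dmax_ge_log_collision_general ρAB hρAB htr σB hσB hfeas

end
end
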